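/- arXiv:2402.16076 — 10 statements merged into one kernel-verified Lean document; each statement's English description precedes it below -/
import Mathlib

section
/- Let X, Y be metric spaces, V a compact subset of X, and f : X → Y continuous. If the restriction of f to V is injective, and for each x ∈ V there exists a neighborhood U_x of x in X such that f restricted to U_x is injective, then there exists a neighborhood U of V in X such that f restricted to U is injective. -/
/-- Local injectivity plus injectivity on a compact set gives injectivity on a
neighborhood of the compact set. -/
theorem stmt_1 {X Y : Type*} [MetricSpace X] [MetricSpace Y]
    (V : Set X) (hV : IsCompact V) (f : X → Y) (hf : Continuous f)
    (hinj : Set.InjOn f V)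
    (hloc : ∀ x ∈ V, ∃ U ∈ nhds x, Set.InjOn f U) :
    ∃ U : Set X, (∃ O : Set X, IsOpen O ∧ V ⊆ O ∧ O ⊆ U) ∧ Set.InjOn f U := by
  -- It suffices to find ε > 0 with f injective on the ε-thickening of V.
  suffices h : ∃ ε : ℝ, 0 < ε ∧ Set.InjOn f (Metric.thickening ε V) by
    obtain ⟨ε, hε, hinj'⟩ := h
    exact ⟨Metric.thickening ε V,
      ⟨Metric.thickening ε V, Metric.isOpen_thickening,
        Metric.self_subset_thickening hε V, subset_rfl⟩, hinj'⟩
  by_contra hc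
  push_neg at hc
  have H : ∀ n : ℕ, ∃ p : X × X,
      p.1 ∈ Metric.thickening (1 / (n + 1)) V ∧
      p.2 ∈ Metric.thickening (1 / (n + 1)) V ∧ f p.1 = f p.2 ∧ p.1 ≠ p.2 := by
    intro n
    have h1 : (0:ℝ) < 1 / (n + 1) := by positivity
    have := hc (1 / (n + 1)) h1
    rw [Set.InjOn] at this
    push_neg at this
    obtain ⟨a, ha, b, hb, hab, hne⟩ := this
    exact ⟨⟨a, b⟩, ha, hb, hab, hne⟩
  choose p ha hb hfab hne using H
  set a : ℕ → X := fun n => (p n).1 with ha_def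
  set b : ℕ → X := fun n => (p n).2 with hb_def
  -- pick close points in V
  have hv' : ∀ n : ℕ, ∃ v ∈ V, dist (a n) v < 1 / (n + 1) := by
    intro n
    have := ha n
    rw [Metric.mem_thickening_iff] at this
    exact this
  have hw' : ∀ n : ℕ, ∃ w ∈ V, dist (b n) w < 1 / (n + 1) := by
    intro n
    have := hb n
    rw [Metric.mem_thickening_iff] at this
    exact this
  choose v hvV hva using hv'
  choose w hwV hwb using hw'
  -- extract subsequences
  obtain ⟨x, hxV, φ, hφ, hvx⟩ := hV.tendsto_subseq hvV
  obtain ⟨y, hyV, ψ, hψ, hwy⟩ := hV.tendsto_subseq (fun n => hwV (φ n))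
  have hmono : StrictMono (φ ∘ ψ) := hφ.comp hψ
  have hzero : Filter.Tendsto (fun n : ℕ => (1 : ℝ) / (n + 1)) Filter.atTop (nhds 0) :=
    tendsto_one_div_add_atTop_nhds_zero_nat
  have hbound : ∀ (σ : ℕ → ℕ), StrictMono σ → ∀ n : ℕ,
      (1 : ℝ) / (σ n + 1) ≤ 1 / (n + 1) := by
    intro σ hσ n
    apply one_div_le_one_div_of_le (by positivity)
    have : (n:ℝ) ≤ σ n := by exact_mod_cast hσ.le_apply
    linarith
  -- a ∘ φ ∘ ψ → x
  have hax : Filter.Tendsto (fun n => a (φ (ψ n))) Filter.atTop (nhds x) := by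
    rw [tendsto_iff_dist_tendsto_zero]
    apply squeeze_zero (fun n => dist_nonneg)
      (g := fun n => 1 / (n + 1) + dist (v (φ (ψ n))) x)
    · intro n
      calc dist (a (φ (ψ n))) x ≤ dist (a (φ (ψ n))) (v (φ (ψ n))) + dist (v (φ (ψ n))) x :=
            dist_triangle _ _ _
        _ ≤ 1 / (n + 1) + dist (v (φ (ψ n))) x := by
            have h1 := (hva (φ (ψ n))).le
            have h2 := hbound (φ ∘ ψ) hmono n
            simp only [Function.comp] at h2
            linarith
    · have hvx' : Filter.Tendsto (fun n => dist (v (φ (ψ n))) x) Filter.atTop (nhds 0) := by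
        have := (hvx.comp hψ.tendsto_atTop)
        rw [tendsto_iff_dist_tendsto_zero] at this
        exact this
      simpa using hzero.add hvx'
  -- b ∘ φ ∘ ψ → y
  have hby : Filter.Tendsto (fun n => b (φ (ψ n))) Filter.atTop (nhds y) := by
    rw [tendsto_iff_dist_tendsto_zero]
    apply squeeze_zero (fun n => dist_nonneg)
      (g := fun n => 1 / (n + 1) + dist (w (φ (ψ n))) y)
    · intro n
      calc dist (b (φ (ψ n))) y ≤ dist (b (φ (ψ n))) (w (φ (ψ n))) + dist (w (φ (ψ n))) y :=
            dist_triangle _ _ _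
        _ ≤ 1 / (n + 1) + dist (w (φ (ψ n))) y := by
            have h1 := (hwb (φ (ψ n))).le
            have h2 := hbound (φ ∘ ψ) hmono n
            simp only [Function.comp] at h2
            linarith
    · have hwy' : Filter.Tendsto (fun n => dist (w (φ (ψ n))) y) Filter.atTop (nhds 0) := by
        exact tendsto_iff_dist_tendsto_zero.mp hwy
      simpa using hzero.add hwy'
  -- f x = f y, hence x = y
  have hfx : Filter.Tendsto (fun n => f (a (φ (ψ n)))) Filter.atTop (nhds (f x)) :=
    (hf.continuousAt.tendsto).comp hax
  have hfy : Filter.Tendsto (fun n => f (a (φ (ψ n)))) Filter.atTop (nhds (f y)) := by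
    have : (fun n => f (a (φ (ψ n)))) = fun n => f (b (φ (ψ n))) := by
      funext n; exact hfab (φ (ψ n))
    rw [this]
    exact (hf.continuousAt.tendsto).comp hby
  have hxy : x = y := hinj hxV hyV (tendsto_nhds_unique hfx hfy)
  subst hxy
  -- local injectivity at x gives a contradiction
  obtain ⟨U, hU, hUinj⟩ := hloc x hxV
  have h1 : ∀ᶠ n in Filter.atTop, a (φ (ψ n)) ∈ U := hax.eventually_mem hU
  have h2 : ∀ᶠ n in Filter.atTop, b (φ (ψ n)) ∈ U := hby.eventually_mem hU
  obtain ⟨n, hn1, hn2⟩ := (h1.and h2).exists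
  exact hne (φ (ψ n)) (hUinj hn1 hn2 (hfab (φ (ψ n))))
end

section
/- Let X, Y be metric spaces, V a compact subset of X, and f : X → Y continuous with f|V injective. Suppose every point of V has ε(x) > 0 with f injective on the closed ball B(x, 3ε(x)). Then there exists δ > 0 such that for all x, y ∈ V with d(x,y) ≥ min over a finite subcover of the ε's, the images f(B(x,δ)) and f(B(y,δ)) are disjoint; in particular there is δ > 0 such that f is injective on the δ-neighborhood of V. -/
/-- Quantitative local-to-global injectivity: if `f` is injective on the compact set `V`
and injective on closed balls `B(x, 3ε(x))` around each `x ∈ V`, then there are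
`ε > 0` and `δ > 0` such that images of `δ`-balls around points of `V` at distance
`≥ ε` are disjoint, and `f` is injective on the `δ`-neighborhood of `V`. -/
theorem stmt_2 {X Y : Type*} [MetricSpace X] [MetricSpace Y]
    (V : Set X) (hV : IsCompact V) (f : X → Y) (hf : Continuous f)
    (hinj : Set.InjOn f V)
    (hloc : ∀ x ∈ V, ∃ ε > (0 : ℝ), Set.InjOn f (Metric.closedBall x (3 * ε))) :
    ∃ ε > (0 : ℝ), ∃ δ > (0 : ℝ),
      (∀ x ∈ V, ∀ y ∈ V, ε ≤ dist x y →
        Disjoint (f '' Metric.closedBall x δ) (f '' Metric.closedBall y δ)) ∧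
      Set.InjOn f (⋃ x ∈ V, Metric.closedBall x δ) := by
  classical
  rcases V.eq_empty_or_nonempty with rfl | hVne
  · exact ⟨1, one_pos, 1, one_pos, by simp, by simp⟩
  -- choose local radii
  have hloc' : ∀ x : X, ∃ ε > (0:ℝ), x ∈ V → Set.InjOn f (Metric.closedBall x (3*ε)) := by
    intro x
    by_cases hx : x ∈ V
    · obtain ⟨ε, hε, h⟩ := hloc x hx; exact ⟨ε, hε, fun _ => h⟩
    · exact ⟨1, one_pos, fun h => absurd h hx⟩
  choose r hr hrinj using hloc'
  -- finite subcover by balls of radius r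
  obtain ⟨t, ht, hcov⟩ := hV.elim_nhds_subcover (fun x => Metric.ball x (r x))
    (fun x _ => Metric.ball_mem_nhds x (hr x))
  have htne : t.Nonempty := by
    obtain ⟨x₀, hx₀⟩ := hVne
    obtain ⟨z, hz, _⟩ := Set.mem_iUnion₂.mp (hcov hx₀)
    exact ⟨z, hz⟩
  set ε : ℝ := t.inf' htne r with hεdef
  have hεpos : 0 < ε := by
    rw [hεdef, Finset.lt_inf'_iff]
    exact fun b _ => hr b
  have hεle : ∀ z ∈ t, ε ≤ r z := fun z hz => Finset.inf'_le r hz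
  -- uniform separation on far pairs
  have hc : ∃ c > (0:ℝ), ∀ x ∈ V, ∀ y ∈ V, ε ≤ dist x y → c ≤ dist (f x) (f y) := by
    set S : Set (X × X) := (V ×ˢ V) ∩ {p : X × X | ε ≤ dist p.1 p.2} with hSdef
    by_cases hS : S.Nonempty
    · have hScomp : IsCompact S := by
        apply (hV.prod hV).inter_right
        exact isClosed_le continuous_const continuous_dist
      obtain ⟨p, hp, hmin⟩ := hScomp.exists_isMinOn hS
        ((hf.comp continuous_fst).dist (hf.comp continuous_snd)).continuousOn
      have hp1 : p.1 ∈ V := hp.1.1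
      have hp2 : p.2 ∈ V := hp.1.2
      have hne : p.1 ≠ p.2 := by
        intro h
        have : ε ≤ dist p.1 p.2 := hp.2
        rw [h, dist_self] at this
        linarith
      have hfne : f p.1 ≠ f p.2 := fun h => hne (hinj hp1 hp2 h)
      refine ⟨dist (f p.1) (f p.2), dist_pos.mpr hfne, ?_⟩
      intro x hx y hy hxy
      exact hmin (show (x, y) ∈ S from ⟨⟨hx, hy⟩, hxy⟩)
    · refine ⟨1, one_pos, ?_⟩
      intro x hx y hy hxy
      exact absurd (show (x, y) ∈ S from ⟨⟨hx, hy⟩, hxy⟩) (fun h => hS ⟨_, h⟩)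
  obtain ⟨c, hcpos, hc⟩ := hc
  -- continuity moduli
  have hδ : ∀ x : X, ∃ d > (0:ℝ), ∀ a, dist a x ≤ 2*d → dist (f a) (f x) < c/4 := by
    intro x
    obtain ⟨d, hd, h⟩ := Metric.continuousAt_iff.mp hf.continuousAt (c/4) (by positivity)
    exact ⟨d/3, by positivity, fun a ha => h (lt_of_le_of_lt ha (by linarith))⟩
  choose d hd hdprop using hδ
  obtain ⟨s, hs, hcov2⟩ := hV.elim_nhds_subcover (fun x => Metric.ball x (d x))
    (fun x _ => Metric.ball_mem_nhds x (hd x))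
  have hsne : s.Nonempty := by
    obtain ⟨x₀, hx₀⟩ := hVne
    obtain ⟨z, hz, _⟩ := Set.mem_iUnion₂.mp (hcov2 hx₀)
    exact ⟨z, hz⟩
  set δ : ℝ := min ε (s.inf' hsne d) with hδdef
  have hδpos : 0 < δ := by
    rw [hδdef, lt_min_iff]
    refine ⟨hεpos, ?_⟩
    rw [Finset.lt_inf'_iff]
    exact fun b _ => hd b
  have hδε : δ ≤ ε := min_le_left _ _
  have key : ∀ x ∈ V, ∀ a ∈ Metric.closedBall x δ, dist (f a) (f x) < c/2 := by
    intro x hx a ha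
    obtain ⟨z, hz, hxz⟩ := Set.mem_iUnion₂.mp (hcov2 hx)
    have hδz : δ ≤ d z := le_trans (min_le_right _ _) (Finset.inf'_le d hz)
    have hax : dist a x ≤ δ := Metric.mem_closedBall.mp ha
    have hxz' : dist x z < d z := Metric.mem_ball.mp hxz
    have h1 : dist a z ≤ 2 * d z :=
      calc dist a z ≤ dist a x + dist x z := dist_triangle _ _ _
        _ ≤ 2 * d z := by linarith
    have h2 : dist x z ≤ 2 * d z := by
      have := (hd z).le; linarith
    calc dist (f a) (f x) ≤ dist (f a) (f z) + dist (f x) (f z) := dist_triangle_right _ _ _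
      _ < c/4 + c/4 := add_lt_add (hdprop z a h1) (hdprop z x h2)
      _ = c/2 := by ring
  have hdisj : ∀ x ∈ V, ∀ y ∈ V, ε ≤ dist x y →
      Disjoint (f '' Metric.closedBall x δ) (f '' Metric.closedBall y δ) := by
    intro x hx y hy hxy
    rw [Set.disjoint_left]
    rintro b ⟨a, ha, rfl⟩ ⟨a', ha', hfa⟩
    have h1 := key x hx a ha
    have h2 := key y hy a' ha'
    have h3 := hc x hx y hy hxy
    have h4 : dist (f x) (f y) ≤ dist (f a) (f x) + dist (f a') (f y) := by
      calc dist (f x) (f y) ≤ dist (f x) (f a) + dist (f a) (f y) := dist_triangle _ _ _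
        _ = dist (f a) (f x) + dist (f a') (f y) := by rw [dist_comm (f x) (f a), hfa]
    linarith
  refine ⟨ε, hεpos, δ, hδpos, hdisj, ?_⟩
  · intro a ha b hb hab
    obtain ⟨x, hx, hax⟩ := Set.mem_iUnion₂.mp ha
    obtain ⟨y, hy, hby⟩ := Set.mem_iUnion₂.mp hb
    by_cases hfar : ε ≤ dist x y
    · exact absurd ⟨a, hax, rfl⟩
        (Set.disjoint_right.mp (hdisj x hx y hy hfar) ⟨b, hby, hab.symm⟩)
    · push_neg at hfar
      obtain ⟨z, hz, hxz⟩ := Set.mem_iUnion₂.mp (hcov hx)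
      have hεz : ε ≤ r z := hεle z hz
      have hxz' : dist x z < r z := Metric.mem_ball.mp hxz
      have hax' : dist a x ≤ δ := Metric.mem_closedBall.mp hax
      have hby' : dist b y ≤ δ := Metric.mem_closedBall.mp hby
      have haz : a ∈ Metric.closedBall z (3 * r z) := by
        rw [Metric.mem_closedBall]
        calc dist a z ≤ dist a x + dist x z := dist_triangle _ _ _
          _ ≤ 3 * r z := by linarith
      have hbz : b ∈ Metric.closedBall z (3 * r z) := by
        rw [Metric.mem_closedBall]
        calc dist b z ≤ dist b y + dist y x + dist x z := dist_triangle4 _ _ _ _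
          _ ≤ 3 * r z := by
            rw [dist_comm y x]
            linarith
      exact hrinj z (ht z hz) haz hbz hab
end

section
/- No arc in the plane ℝ² separates ℝ²; that is, if A ⊆ ℝ² is homeomorphic to the unit interval [0,1], then ℝ² \ A is connected. -/
/-!
Translate to `ℂ`. For `c` off the arc `K`, the map `z ↦ z - c` has a continuous logarithm on `K`:
`K ≅ [0,1]` is simply connected, so it lifts through the covering `exp : ℂ → ℂ \ {0}`. If the
component `U` of `c` in `Kᶜ` were bounded, extend that logarithm `g` to `ℂ` (Tietze) and put
`F = c + exp ∘ g` on `U` and `F = id` off `U`. As `∂U ⊆ K`, `F` is continuous; it omits `c` and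
is the identity on a large circle around `c`. A logarithm of `F - c` on the disc would restrict
to a continuous logarithm of `z - c` on the circle, which does not exist. Hence every component
of `Kᶜ` is unbounded, so meets the connected exterior of a large disc, and `Kᶜ` is connected.
-/

open Bornology Complex Metric Set Topology Real

theorem IsOpen.frontier_connectedComponentIn_subset {α : Type*} [TopologicalSpace α]
    [LocallyConnectedSpace α] {F : Set α} (hF : IsOpen F) (x : α) :
    frontier (connectedComponentIn F x) ⊆ Fᶜ := by
  intro y hy hyF
  rw [hF.connectedComponentIn.frontier_eq] at hy
  obtain ⟨z, hzy, hzx⟩ := mem_closure_iff.mp hy.1 _ hF.connectedComponentIn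
    (mem_connectedComponentIn hyF)
  exact hy.2 (connectedComponentIn_eq hzx ▸ connectedComponentIn_eq hzy ▸
    mem_connectedComponentIn hyF)

theorem isConnected_compl_closedBall {E : Type*} [NormedAddCommGroup E] [NormedSpace ℝ E]
    (h : 1 < Module.rank ℝ E) (x : E) {r : ℝ} (hr : 0 ≤ r) :
    IsConnected (closedBall x r)ᶜ := by
  have hprod := (isConnected_Ioi (a := r)).prod (isConnected_sphere h (0 : E) zero_le_one)
  convert hprod.image (fun p : ℝ × E => x + p.1 • p.2) (by fun_prop) using 1
  ext z
  simp only [mem_compl_iff, mem_closedBall, not_le, mem_image, mem_prod, mem_Ioi,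
    mem_sphere_zero_iff_norm, Prod.exists]
  constructor
  · intro hz
    have hz₀ : ‖z - x‖ ≠ 0 := ((hr.trans_lt hz).trans_eq (dist_eq_norm z x)).ne'
    refine ⟨‖z - x‖, ‖z - x‖⁻¹ • (z - x), ⟨by rwa [dist_eq_norm] at hz, ?_⟩, ?_⟩
    · rw [norm_smul, norm_inv, norm_norm, inv_mul_cancel₀ hz₀]
    · rw [smul_inv_smul₀ hz₀, add_sub_cancel]
  · rintro ⟨s, u, ⟨hs, hu⟩, rfl⟩
    rwa [dist_eq_norm, add_sub_cancel_left, norm_smul, hu, mul_one,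
      Real.norm_of_nonneg (hr.trans hs.le)]

theorem isConnected_compl_of_forall_not_isBounded {E : Type*} [NormedAddCommGroup E]
    [NormedSpace ℝ E] (h : 1 < Module.rank ℝ E) {K : Set E} (hK : IsBounded K)
    (hunb : ∀ z ∉ K, ¬ IsBounded (connectedComponentIn Kᶜ z)) : IsConnected Kᶜ := by
  obtain ⟨r, hr, hKr⟩ := hK.subset_closedBall_lt 0 0
  have hext := isConnected_compl_closedBall h 0 hr.le
  have hextK : (closedBall 0 r)ᶜ ⊆ Kᶜ := compl_subset_compl.mpr hKr
  obtain ⟨w, hw⟩ := hext.nonempty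
  suffices hcomp : Kᶜ ⊆ connectedComponentIn Kᶜ w by
    rw [hcomp.antisymm (connectedComponentIn_subset _ _)]
    exact isConnected_connectedComponentIn_iff.mpr (hextK hw)
  intro z hz
  obtain ⟨y, hyz, hyr⟩ := not_subset.mp fun h => hunb z hz (isBounded_closedBall.subset h)
  have hyw := hext.isPreconnected.subset_connectedComponentIn hw hextK hyr
  rw [connectedComponentIn_eq hyw, ← connectedComponentIn_eq hyz]
  exact mem_connectedComponentIn hz

def HasContinuousLog {X : Type*} [TopologicalSpace X] (f : X → ℂ) : Prop :=
  ∃ g : C(X, ℂ), ∀ x, exp (g x) = f x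

namespace HasContinuousLog

variable {X Y : Type*} [TopologicalSpace X] [TopologicalSpace Y]

theorem comp {f : X → ℂ} (hf : HasContinuousLog f) (φ : C(Y, X)) : HasContinuousLog (f ∘ φ) :=
  let ⟨g, hg⟩ := hf
  ⟨g.comp φ, fun y => hg (φ y)⟩

theorem of_simplyConnectedSpace [SimplyConnectedSpace X] [LocallyPathConnectedSpace X]
    {f : X → ℂ} (hf : Continuous f) (hf₀ : ∀ x, f x ≠ 0) : HasContinuousLog f := by
  obtain ⟨x₀⟩ := (inferInstance : Nonempty X)
  obtain ⟨g, ⟨-, hg⟩, -⟩ := isCoveringMapOn_exp.existsUnique_continuousMap_lifts ⟨f, hf⟩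
    (exp_log (hf₀ x₀)) hf₀
  exact ⟨g, congrFun hg⟩

theorem of_convex {E : Type*} [NormedAddCommGroup E] [NormedSpace ℝ E] {s : Set E}
    (hs : Convex ℝ s) {f : s → ℂ} (hf : Continuous f) (hf₀ : ∀ x, f x ≠ 0) :
    HasContinuousLog f := by
  rcases s.eq_empty_or_nonempty with rfl | hne
  · exact ⟨⟨fun _ => 0, continuous_const⟩, fun x => x.2.elim⟩
  have := hs.contractibleSpace hne
  have := hs.locallyPathConnectedSpace
  exact of_simplyConnectedSpace hf hf₀

theorem of_homeomorph_convex {E : Type*} [NormedAddCommGroup E] [NormedSpace ℝ E] {s : Set E}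
    (hs : Convex ℝ s) (φ : X ≃ₜ s) {f : X → ℂ} (hf : Continuous f) (hf₀ : ∀ x, f x ≠ 0) :
    HasContinuousLog f := by
  simpa [Function.comp_def] using
    (of_convex hs (hf.comp φ.symm.continuous) fun x => hf₀ _).comp ⟨φ, φ.continuous⟩

end HasContinuousLog

/- Along `t ↦ c + R e^{it}`, a logarithm minus `log R + it` is continuous with values in `2πiℤ`,
hence constant; but it changes by `-2πi` from `t = 0` to `t = 2π`. -/
theorem not_hasContinuousLog_sub_center_sphere {c : ℂ} {R : ℝ} (hR : 0 < R) :
    ¬ HasContinuousLog (fun z : sphere c R => (z : ℂ) - c) := by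
  rintro ⟨g, hg⟩
  let γ : ℝ → sphere c R := fun t =>
    ⟨c + R * exp (t * I), by simp [norm_exp_ofReal_mul_I, abs_of_pos hR]⟩
  have hγ : Continuous γ := by fun_prop
  have hγ_period : γ (2 * π) = γ 0 := by
    ext; simp [γ]
  let h : ℝ → ℂ := fun t => g (γ t) - (Real.log R + t * I)
  have h_mem : MapsTo h univ (AddSubgroup.zmultiples (2 * π * I)) := by
    intro t _
    have : exp (h t) = 1 := by
      rw [Complex.exp_sub, hg, Complex.exp_add, ← ofReal_exp, Real.exp_log hR]
      simp [γ, Complex.exp_ne_zero, hR.ne']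
    obtain ⟨n, hn⟩ := exp_eq_one_iff.mp this
    exact ⟨n, by simp [hn]⟩
  have := isPreconnected_univ.constant_of_mapsTo
    (isDiscrete_iff_discreteTopology.mpr (NormedSpace.discreteTopology_zmultiples _))
    (by fun_prop) h_mem (mem_univ (2 * π)) (mem_univ 0)
  simp [h, hγ_period, pi_ne_zero] at this

theorem exists_eq_center_of_eqOn_sphere {F : ℂ → ℂ} {c : ℂ} {R : ℝ} (hR : 0 < R)
    (hF : ContinuousOn F (closedBall c R)) (hF_sphere : EqOn F id (sphere c R)) :
    ∃ z ∈ closedBall c R, F z = c := by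
  by_contra! hF_ne
  have hlog : HasContinuousLog (fun z : closedBall c R => F z - c) :=
    .of_convex (convex_closedBall c R) (hF.domRestrict.sub continuous_const)
      fun z => sub_ne_zero.mpr (hF_ne z z.2)
  refine not_hasContinuousLog_sub_center_sphere (c := c) hR ?_
  convert hlog.comp ⟨inclusion sphere_subset_closedBall, continuous_inclusion _⟩ using 1
  ext z
  simp [hF_sphere z.2]

theorem not_isBounded_of_hasContinuousLog {U K : Set ℂ} {c : ℂ} (hc : c ∈ U)
    (hK : IsClosed K) (hUK : frontier U ⊆ K)
    (hlog : HasContinuousLog (fun z : K => (z : ℂ) - c)) : ¬ IsBounded U := by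
  intro hU_bdd
  obtain ⟨g, hg⟩ := hlog
  obtain ⟨G, hG⟩ := ContinuousMap.exists_restrict_eq hK g
  have hGK : ∀ z ∈ K, exp (G z) = z - c := fun z hz => by
    simpa [← hG] using hg ⟨z, hz⟩
  classical
  let F := U.piecewise (fun z => c + exp (G z)) id
  have hF : Continuous F :=
    continuous_piecewise (fun z hz => by simp [hGK z (hUK hz)]) (by fun_prop) continuousOn_id
  obtain ⟨R, hR, hUR⟩ := hU_bdd.subset_ball_lt 0 c
  have hF_sphere : EqOn F id (sphere c R) := fun z hz =>
    piecewise_eq_of_notMem _ _ _ fun hzU => (mem_ball.mp (hUR hzU)).ne (mem_sphere.mp hz)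
  obtain ⟨z, -, hz⟩ := exists_eq_center_of_eqOn_sphere hR hF.continuousOn hF_sphere
  by_cases hzU : z ∈ U
  · simp [F, piecewise_eq_of_mem _ _ _ hzU, Complex.exp_ne_zero] at hz
  · simp only [F, piecewise_eq_of_notMem _ _ _ hzU, id] at hz
    exact hzU (hz ▸ hc)

theorem isConnected_compl_of_hasContinuousLog {K : Set ℂ} (hK : IsCompact K)
    (hlog : ∀ c ∉ K, HasContinuousLog (fun z : K => (z : ℂ) - c)) : IsConnected Kᶜ :=
  isConnected_compl_of_forall_not_isBounded (by simp) hK.isBounded fun c hc =>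
    not_isBounded_of_hasContinuousLog (mem_connectedComponentIn hc) hK.isClosed
      ((hK.isClosed.isOpen_compl.frontier_connectedComponentIn_subset c).trans
        (compl_compl K).subset)
      (hlog c hc)

/-- No arc in the plane separates the plane: if `A ⊆ ℝ²` is homeomorphic to `[0,1]`,
then its complement is connected. -/
theorem stmt_3 (A : Set (ℝ × ℝ))
    (hA : Nonempty (A ≃ₜ (Set.Icc (0 : ℝ) 1))) :
    IsConnected Aᶜ := by
  obtain ⟨φ⟩ := hA
  let e : ℂ ≃ₜ ℝ × ℝ := equivRealProdCLM.toHomeomorph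
  let ψ : e ⁻¹' A ≃ₜ Icc (0 : ℝ) 1 := (e.subtype fun _ => Iff.rfl).trans φ
  have hK : IsCompact (e ⁻¹' A) := isCompact_iff_compactSpace.mpr ψ.symm.compactSpace
  have hKc := isConnected_compl_of_hasContinuousLog hK fun c hc =>
    .of_homeomorph_convex (convex_Icc 0 1) ψ (by fun_prop)
      fun z => sub_ne_zero.mpr fun hzc => hc (hzc ▸ z.2)
  exact e.isConnected_preimage.mp hKc
end

section
/- Every Peano continuum is arcwise connected: if X is a compact, connected, locally connected metric space and x ≠ y are points of X, then there exists an arc J ⊆ X whose endpoint set is {x, y}. -/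
open Metric Set
namespace PeanoArc
set_option linter.unusedSectionVars false
section Help
variable {X : Type*} [MetricSpace X] [LocallyConnectedSpace X]

lemma bounded_all [CompactSpace X] (s : Set X) : Bornology.IsBounded s :=
  (isCompact_univ.isBounded).subset (subset_univ _)

/-- In a locally connected metric space, inside any open set around a point there is a small
connected open set whose closure stays inside. -/
lemma exists_connected_open_small [LocallyConnectedSpace X] {U : Set X} {p : X}
    (hU : IsOpen U) (hp : p ∈ U) {ε : ℝ} (hε : 0 < ε) :
    ∃ V : Set X, IsOpen V ∧ IsConnected V ∧ p ∈ V ∧ closure V ⊆ U ∧ diam V ≤ ε := by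
  obtain ⟨r, hr0, hrU⟩ : ∃ r > 0, closedBall p r ⊆ U := by
    rcases Metric.isOpen_iff.mp hU p hp with ⟨r, hr0, hrU⟩
    exact ⟨r/2, by linarith, (closedBall_subset_ball (by linarith)).trans hrU⟩
  set r' := min r (ε/2) with hr'
  have hr'0 : 0 < r' := lt_min hr0 (by linarith)
  obtain ⟨V, hVsub, hVo, hpV, hVc⟩ :=
    (locallyConnectedSpace_iff_subsets_isOpen_isConnected.mp ‹_›) p (ball p r')
      (ball_mem_nhds p hr'0)
  refine ⟨V, hVo, hVc, hpV, ?_, ?_⟩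
  · refine (closure_mono hVsub).trans ?_
    exact (closure_ball_subset_closedBall).trans
      ((closedBall_subset_closedBall (min_le_left _ _)).trans hrU)
  · calc diam V ≤ diam (ball p r') := diam_mono hVsub isBounded_ball
    _ ≤ 2 * r' := diam_ball hr'0.le
    _ ≤ 2 * (ε/2) := by have := min_le_right r (ε/2); linarith
    _ = ε := by ring

/-- connectedness of a union of a finite chain of connected sets -/
lemma chain_union_connected (W : ℕ → Set X) : ∀ q : ℕ, (∀ i ≤ q, IsConnected (W i)) →
    (∀ i < q, (W i ∩ W (i+1)).Nonempty) →
    IsConnected (⋃ i ∈ Finset.range (q+1), W i) := by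
  intro q
  induction q with
  | zero => intro h _; simpa using h 0 le_rfl
  | succ q ih =>
    intro hc hl
    have h1 : IsConnected (⋃ i ∈ Finset.range (q+1), W i) :=
      ih (fun i hi => hc i (hi.trans (Nat.le_succ _))) (fun i hi => hl i (hi.trans (Nat.lt_succ_self _)))
    have h2 : IsConnected (W (q+1)) := hc (q+1) le_rfl
    obtain ⟨w, hw1, hw2⟩ := hl q (Nat.lt_succ_self _)
    have : (⋃ i ∈ Finset.range (q+2), W i) = (⋃ i ∈ Finset.range (q+1), W i) ∪ W (q+1) := by
      rw [Finset.range_add_one]; simp [Set.union_comm]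
    rw [this]
    refine ⟨⟨w, Or.inl ?_, ⟩, h1.isPreconnected.union w ?_ hw2 h2.isPreconnected⟩
    · exact mem_biUnion (Finset.self_mem_range_succ q) hw1
    · exact mem_biUnion (Finset.self_mem_range_succ q) hw1

/-- Discrete intermediate value: a ℕ-valued function with steps 0 or +1 hits every value
between its endpoints. -/
lemma nat_ivt (f : ℕ → ℕ) (r : ℕ) (hstep : ∀ i < r, f (i+1) = f i ∨ f (i+1) = f i + 1)
    (j : ℕ) (h0 : f 0 ≤ j) (hr : j ≤ f r) : ∃ c ≤ r, f c = j := by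
  induction r with
  | zero => exact ⟨0, le_rfl, le_antisymm h0 hr⟩
  | succ r ih =>
    rcases le_or_gt j (f r) with h | h
    · obtain ⟨c, hc, hfc⟩ := ih (fun i hi => hstep i (hi.trans (Nat.lt_succ_self _))) h
      exact ⟨c, hc.trans (Nat.le_succ _), hfc⟩
    · rcases hstep r (Nat.lt_succ_self _) with he | he
      · omega
      · exact ⟨r+1, le_rfl, by omega⟩

/-- monotonicity from steps -/
lemma mono_of_steps (f : ℕ → ℕ) (r : ℕ) (hstep : ∀ i < r, f (i+1) = f i ∨ f (i+1) = f i + 1) :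
    ∀ ⦃c c'⦄, c ≤ c' → c' ≤ r → f c ≤ f c' := by
  intro c c' hcc' hc'
  induction c' with
  | zero => obtain rfl : c = 0 := Nat.le_zero.mp hcc'; exact le_rfl
  | succ d ih =>
    rcases Nat.eq_or_lt_of_le hcc' with rfl | h
    · exact le_refl _
    · have h1 := ih (by omega) (by omega)
      have h2 := hstep d (by omega)
      omega

/-- Positive uniform separation between a compact set and a disjoint closed set. -/
lemma sep_dist {s t : Set X} (hs : IsCompact s) (ht : IsClosed t)
    (hst : s ∩ t = ∅) : ∃ κ > 0, ∀ a ∈ s, ∀ b ∈ t, κ ≤ dist a b := by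
  rcases s.eq_empty_or_nonempty with rfl | hsne
  · exact ⟨1, one_pos, by simp⟩
  rcases t.eq_empty_or_nonempty with rfl | htne
  · exact ⟨1, one_pos, by simp⟩
  obtain ⟨a₀, ha₀, hmin⟩ := hs.exists_isMinOn hsne (continuous_infDist_pt t).continuousOn
  have ha₀t : a₀ ∉ t := fun h => by
    have : a₀ ∈ s ∩ t := ⟨ha₀, h⟩
    simp [hst] at this
  refine ⟨infDist a₀ t, (ht.notMem_iff_infDist_pos htne).mp ha₀t, fun a ha b hb => ?_⟩
  exact le_trans (hmin ha) (infDist_le_dist_of_mem hb)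


/-- links of a chain inside an open set `U` at mesh `ε` -/
def IsLink (U : Set X) (ε : ℝ) (A : Set X) : Prop :=
  IsOpen A ∧ IsConnected A ∧ closure A ⊆ U ∧ diam A ≤ ε

/-- Any two points of an open connected set are joined by a chain of small connected open
links whose closures stay inside the set. -/
lemma chain_in_open {U : Set X} (hU : IsOpen U) (hUc : IsPreconnected U)
    {a b : X} (ha : a ∈ U) (hb : b ∈ U) {ε : ℝ} (hε : 0 < ε) :
    ∃ (q : ℕ) (W : ℕ → Set X), (∀ i ≤ q, IsLink U ε (W i)) ∧
      (∀ i < q, (W i ∩ W (i+1)).Nonempty) ∧ a ∈ W 0 ∧ b ∈ W q := by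
  set R : Set X := {c | ∃ (q : ℕ) (W : ℕ → Set X), (∀ i ≤ q, IsLink U ε (W i)) ∧
      (∀ i < q, (W i ∩ W (i+1)).Nonempty) ∧ a ∈ W 0 ∧ c ∈ W q} with hR
  have hlink : ∀ p ∈ U, ∃ V, IsLink U ε V ∧ p ∈ V := by
    intro p hp
    obtain ⟨V, h1, h2, h3, h4, h5⟩ := exists_connected_open_small hU hp hε
    exact ⟨V, ⟨h1, h2, h4, h5⟩, h3⟩
  have hstepR : ∀ c ∈ R, ∀ V, IsLink U ε V → c ∈ V → V ⊆ R := by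
    rintro c ⟨q, W, hW, hWl, haW, hcW⟩ V hV hcV d hdV
    refine ⟨q+1, fun i => if i ≤ q then W i else V, ?_, ?_, ?_, ?_⟩
    · intro i hi
      by_cases h : i ≤ q
      · simpa [h] using hW i h
      · simpa [h] using hV
    · intro i hi
      rcases Nat.lt_or_ge i q with h | h
      · have h1 : i ≤ q := h.le
        have h2 : i + 1 ≤ q := h
        simpa [h1, h2] using hWl i h
      · have h1 : i = q := by omega
        rw [h1]; simp only [le_refl, if_pos, if_neg (Nat.not_succ_le_self q)]
        exact ⟨c, hcW, hcV⟩
    · simpa using haW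
    · simpa [Nat.not_succ_le_self q] using hdV
  have hRsubU : R ⊆ U := by
    rintro c ⟨q, W, hW, _, _, hcW⟩
    exact (hW q le_rfl).2.2.1 (subset_closure hcW)
  have haR : a ∈ R := by
    obtain ⟨V, hV, haV⟩ := hlink a ha
    exact ⟨0, fun _ => V, fun i _ => hV, fun i h => absurd h (Nat.not_lt_zero i), haV, haV⟩
  have hRopen : IsOpen R := by
    refine isOpen_iff_mem_nhds.mpr fun c hc => ?_
    obtain ⟨V, hV, hcV⟩ := hlink c (hRsubU hc)
    exact Filter.mem_of_superset (hV.1.mem_nhds hcV) (hstepR c hc V hV hcV)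
  have hR'open : IsOpen {c | c ∈ U ∧ c ∉ R} := by
    refine isOpen_iff_mem_nhds.mpr fun c hc => ?_
    obtain ⟨V, hV, hcV⟩ := hlink c hc.1
    refine Filter.mem_of_superset (hV.1.mem_nhds hcV) fun d hdV => ?_
    refine ⟨hV.2.2.1 (subset_closure hdV), fun hdR => hc.2 ?_⟩
    exact hstepR d hdR V hV hdV hcV
  by_contra hcon
  have hbR : b ∉ R := by
    intro hbR
    obtain ⟨q, W, hW, hWl, haW, hbW⟩ := hbR
    exact hcon ⟨q, W, hW, hWl, haW, hbW⟩
  obtain ⟨z, hz⟩ := hUc R {c | c ∈ U ∧ c ∉ R} hRopen hR'open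
    (fun c hc => by by_cases h : c ∈ R; exacts [Or.inl h, Or.inr ⟨hc, h⟩])
    ⟨a, ha, haR⟩ ⟨b, hb, hb, hbR⟩
  exact hz.2.2.2 hz.2.1

/-- helper: monotone from adjacent ≤ -/
lemma mono_of_steps_le (f : ℕ → ℕ) (r : ℕ) (hstep : ∀ i < r, f i ≤ f (i+1)) :
    ∀ ⦃c c'⦄, c ≤ c' → c' ≤ r → f c ≤ f c' := by
  intro c c' hcc' hc'
  induction c' with
  | zero => obtain rfl : c = 0 := Nat.le_zero.mp hcc'; exact le_rfl
  | succ d ih =>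
    rcases Nat.eq_or_lt_of_le hcc' with rfl | h
    · exact le_refl _
    · exact (ih (by omega) (by omega)).trans (hstep d (by omega))

/-- From any chain of sets from `x` to `y` one can extract a *simple* chain. -/
lemma extract {N : ℕ} {E : ℕ → Set X} {x y : X}
    (hx : x ∈ E 0) (hy : y ∈ E N) (hcons : ∀ c < N, (E c ∩ E (c+1)).Nonempty) :
    ∃ (r : ℕ) (σ : ℕ → ℕ), (∀ i < r, σ i ≤ σ (i+1)) ∧ (∀ i ≤ r, σ i ≤ N) ∧
      x ∈ E (σ 0) ∧ y ∈ E (σ r) ∧ (∀ i < r, (E (σ i) ∩ E (σ (i+1))).Nonempty) ∧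
      (∀ i j, i + 2 ≤ j → j ≤ r → E (σ i) ∩ E (σ j) = ∅) ∧
      (∀ c ≤ r, x ∈ E (σ c) → c = 0) ∧ (∀ c ≤ r, y ∈ E (σ c) → c = r) := by
  classical
  set P : ℕ → Prop := fun r => ∃ σ : ℕ → ℕ, (∀ i < r, σ i ≤ σ (i+1)) ∧ (∀ i ≤ r, σ i ≤ N) ∧
      x ∈ E (σ 0) ∧ y ∈ E (σ r) ∧ (∀ i < r, (E (σ i) ∩ E (σ (i+1))).Nonempty) with hP
  have hex : ∃ r, P r := ⟨N, id, fun i _ => Nat.le_succ i, fun i hi => hi, hx, hy, hcons⟩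
  obtain ⟨σ, hσ1, hσ2, hσ3, hσ4, hσ5⟩ := Nat.find_spec hex
  set r := Nat.find hex with hr
  have hmin : ∀ r' < r, ¬ P r' := fun r' h => Nat.find_min hex h
  refine ⟨r, σ, hσ1, hσ2, hσ3, hσ4, hσ5, ?_, ?_, ?_⟩
  · -- simplicity
    intro i j hij hjr
    by_contra hne
    obtain ⟨w, hw1, hw2⟩ := Set.nonempty_iff_ne_empty.mpr hne
    set d := j - i - 1 with hd
    have hd1 : 1 ≤ d := by omega
    have hdr : d ≤ r := by omega
    refine hmin (r - d) (by omega) ⟨fun t => if t ≤ i then σ t else σ (t + d), ?_, ?_, ?_, ?_, ?_⟩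
    · intro t ht
      by_cases h1 : t + 1 ≤ i
      · simp only [if_pos h1, if_pos (by omega : t ≤ i)]
        exact hσ1 t (by omega)
      · by_cases h2 : t ≤ i
        · have hti : t = i := by omega
          simp only [if_pos h2, if_neg h1]
          subst hti
          have : t + 1 + d = j := by omega
          rw [this]
          have hmono := mono_of_steps_le σ r hσ1
          exact hmono (by omega : t ≤ j) hjr
        · simp only [if_neg h1, if_neg h2]
          have e : t + 1 + d = (t + d) + 1 := by omega
          rw [e]
          exact hσ1 (t + d) (by omega)
    · intro t ht
      by_cases h2 : t ≤ i
      · simp only [if_pos h2]; exact hσ2 t (by omega)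
      · simp only [if_neg h2]; exact hσ2 (t + d) (by omega)
    · simp only [if_pos (Nat.zero_le i)]; exact hσ3
    · have h2 : ¬ (r - d ≤ i) := by omega
      simp only [if_neg h2]
      have : r - d + d = r := by omega
      rw [this]; exact hσ4
    · intro t ht
      by_cases h1 : t + 1 ≤ i
      · simp only [if_pos h1, if_pos (by omega : t ≤ i)]
        exact hσ5 t (by omega)
      · by_cases h2 : t ≤ i
        · have hti : t = i := by omega
          simp only [if_pos h2, if_neg h1]
          subst hti
          have : t + 1 + d = j := by omega
          rw [this]
          exact ⟨w, hw1, hw2⟩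
        · simp only [if_neg h1, if_neg h2]
          have e : t + 1 + d = (t + d) + 1 := by omega
          rw [e]
          exact hσ5 (t + d) (by omega)
  · -- x only in first
    intro c hc hxc
    by_contra hc0
    have hc1 : 1 ≤ c := by omega
    refine hmin (r - c) (by omega) ⟨fun t => σ (t + c), ?_, ?_, ?_, ?_, ?_⟩
    · intro t ht
      show σ (t + c) ≤ σ (t + 1 + c)
      have e : t + 1 + c = (t + c) + 1 := by omega
      rw [e]
      exact hσ1 (t + c) (by omega)
    · intro t ht; exact hσ2 (t + c) (by omega)
    · simpa using hxc
    · show y ∈ E (σ (r - c + c))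
      have e : r - c + c = r := by omega
      rw [e]; exact hσ4
    · intro t ht
      show (E (σ (t + c)) ∩ E (σ (t + 1 + c))).Nonempty
      have e : t + 1 + c = (t + c) + 1 := by omega
      rw [e]
      exact hσ5 (t + c) (by omega)
  · -- y only in last
    intro c hc hyc
    by_contra hcr
    refine hmin c (by omega) ⟨σ, fun t ht => hσ1 t (by omega), fun t ht => hσ2 t (by omega),
      hσ3, hyc, fun t ht => hσ5 t (by omega)⟩


/-- A chain of sets: `m+1` links `D 0, …, D m`. -/
structure Chn (X : Type*) where
  m : ℕ
  D : ℕ → Set X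

/-- A good chain from `x` to `y` of mesh `ε`: connected open links, consecutive links meet,
closures of non-consecutive links are disjoint, and `x`/`y` appear only at the ends. -/
structure Good (x y : X) (ε : ℝ) (C : Chn X) : Prop where
  opn : ∀ i ≤ C.m, IsOpen (C.D i)
  conn : ∀ i ≤ C.m, IsConnected (C.D i)
  small : ∀ i ≤ C.m, diam (C.D i) ≤ ε
  link : ∀ i < C.m, (C.D i ∩ C.D (i+1)).Nonempty
  sep : ∀ i j, i + 2 ≤ j → j ≤ C.m → closure (C.D i) ∩ closure (C.D j) = ∅
  hx : x ∈ C.D 0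
  hy : y ∈ C.D C.m
  hx' : ∀ i, 1 ≤ i → i ≤ C.m → x ∉ closure (C.D i)
  hy' : ∀ i, i + 1 ≤ C.m → y ∉ closure (C.D i)

/-- `C'` refines `C` along the monotone surjective label map `b` with all fibers of size ≥ 2. -/
structure Refines (C' C : Chn X) (b : ℕ → ℕ) : Prop where
  b0 : b 0 = 0
  blast : b C'.m = C.m
  bstep : ∀ c < C'.m, b (c+1) = b c ∨ b (c+1) = b c + 1
  bsub : ∀ c ≤ C'.m, closure (C'.D c) ⊆ C.D (b c)
  bfib : ∀ j ≤ C.m, ∃ c, c + 1 ≤ C'.m ∧ b c = j ∧ b (c+1) = j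


end Help
section Refine
variable {X : Type*} [MetricSpace X] [CompactSpace X] [LocallyConnectedSpace X]

lemma refine {x y : X} (hxy : x ≠ y) {ε : ℝ} {C : Chn X} (hC : Good x y ε C)
    {ε' : ℝ} (hε' : 0 < ε') :
    ∃ (C' : Chn X) (b : ℕ → ℕ), Good x y ε' C' ∧ Refines C' C b := by
  classical
  obtain ⟨m, D⟩ := C
  obtain ⟨opn, conn, small, link, sep, hx, hy, hx', hy'⟩ := hC
  simp only at opn conn small link sep hx hy hx' hy' ⊢
  -- Step A : a mesh ε'' positive and smaller than all the relevant separation constants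
  have hsep2 : ∀ p : ℕ × ℕ, ∃ κ > 0, p.1 + 2 ≤ p.2 → p.2 ≤ m →
      ∀ a ∈ D p.1, ∀ b' ∈ D p.2, κ ≤ dist a b' := by
    intro p
    by_cases h : p.1 + 2 ≤ p.2 ∧ p.2 ≤ m
    · obtain ⟨κ, hκ, hspec⟩ := sep_dist (isClosed_closure.isCompact) isClosed_closure
        (sep p.1 p.2 h.1 h.2)
      exact ⟨κ, hκ, fun _ _ a ha b' hb' =>
        hspec a (subset_closure ha) b' (subset_closure hb')⟩
    · exact ⟨1, one_pos, fun h1 h2 => absurd ⟨h1, h2⟩ h⟩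
  choose κf κfpos κfspec using hsep2
  have hsepx : ∀ j : ℕ, ∃ κ > 0, 1 ≤ j → j ≤ m → ∀ a ∈ D j, κ ≤ dist x a := by
    intro j
    by_cases h : 1 ≤ j ∧ j ≤ m
    · obtain ⟨κ, hκ, hspec⟩ := sep_dist isCompact_singleton (isClosed_closure (s := D j))
        (by rw [Set.singleton_inter_eq_empty]; exact hx' j h.1 h.2)
      exact ⟨κ, hκ, fun _ _ a ha => hspec x rfl a (subset_closure ha)⟩
    · exact ⟨1, one_pos, fun h1 h2 => absurd ⟨h1, h2⟩ h⟩
  choose κx κxpos κxspec using hsepx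
  have hsepy : ∀ j : ℕ, ∃ κ > 0, j + 1 ≤ m → ∀ a ∈ D j, κ ≤ dist y a := by
    intro j
    by_cases h : j + 1 ≤ m
    · obtain ⟨κ, hκ, hspec⟩ := sep_dist isCompact_singleton (isClosed_closure (s := D j))
        (by rw [Set.singleton_inter_eq_empty]; exact hy' j h)
      exact ⟨κ, hκ, fun _ a ha => hspec y rfl a (subset_closure ha)⟩
    · exact ⟨1, one_pos, fun h1 => absurd h1 h⟩
  choose κy κypos κyspec using hsepy
  set A : Finset ℝ := insert ε' (insert (dist x y)
    (((Finset.range (m+1) ×ˢ Finset.range (m+1)).image κf) ∪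
      ((Finset.range (m+1)).image κx) ∪ ((Finset.range (m+1)).image κy))) with hA
  have hAne : A.Nonempty := ⟨ε', Finset.mem_insert_self _ _⟩
  have hApos : ∀ v ∈ A, 0 < v := by
    intro v hv
    simp only [hA, Finset.mem_insert, Finset.mem_union, Finset.mem_image,
      Finset.mem_product, Finset.mem_range] at hv
    rcases hv with rfl | rfl | hv'
    · exact hε'
    · exact dist_pos.mpr hxy
    · rcases hv' with ⟨⟨p, _, rfl⟩ | ⟨j, _, rfl⟩⟩ | ⟨j, _, rfl⟩
      · exact κfpos p
      · exact κxpos j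
      · exact κypos j
  set ε'' := A.min' hAne / 2 with hε''
  have hε''pos : 0 < ε'' := by
    have := hApos _ (A.min'_mem hAne); positivity
  have hε''lt : ∀ v ∈ A, ε'' < v := by
    intro v hv
    have h1 := A.min'_le v hv
    have h2 := hApos _ (A.min'_mem hAne)
    rw [hε'']; linarith
  have hε''ε' : ε'' < ε' := hε''lt ε' (Finset.mem_insert_self _ _)
  have hKf : ∀ i j, i + 2 ≤ j → j ≤ m → ∀ a ∈ D i, ∀ b' ∈ D j, ε'' < dist a b' := by
    intro i j hij hjm a ha b' hb'
    have hmem : κf (i, j) ∈ A := by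
      have h1 : κf (i, j) ∈ (Finset.range (m+1) ×ˢ Finset.range (m+1)).image κf :=
        Finset.mem_image_of_mem _ (Finset.mem_product.mpr
          ⟨Finset.mem_range.mpr (by omega), Finset.mem_range.mpr (by omega)⟩)
      exact Finset.mem_insert_of_mem (Finset.mem_insert_of_mem
        (Finset.mem_union_left _ (Finset.mem_union_left _ h1)))
    exact lt_of_lt_of_le (hε''lt _ hmem) (κfspec (i, j) hij hjm a ha b' hb')
  have hKx : ∀ j, 1 ≤ j → j ≤ m → ∀ a ∈ D j, ε'' < dist x a := by
    intro j h1 h2 a ha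
    have hmem : κx j ∈ A := by
      have h1 : κx j ∈ (Finset.range (m+1)).image κx :=
        Finset.mem_image_of_mem _ (Finset.mem_range.mpr (by omega))
      exact Finset.mem_insert_of_mem (Finset.mem_insert_of_mem
        (Finset.mem_union_left _ (Finset.mem_union_right _ h1)))
    exact lt_of_lt_of_le (hε''lt _ hmem) (κxspec j h1 h2 a ha)
  have hKy : ∀ j, j + 1 ≤ m → ∀ a ∈ D j, ε'' < dist y a := by
    intro j h1 a ha
    have hmem : κy j ∈ A := by
      have h1 : κy j ∈ (Finset.range (m+1)).image κy :=
        Finset.mem_image_of_mem _ (Finset.mem_range.mpr (by omega))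
      exact Finset.mem_insert_of_mem (Finset.mem_insert_of_mem
        (Finset.mem_union_right _ h1))
    exact lt_of_lt_of_le (hε''lt _ hmem) (κyspec j h1 a ha)
  have hKxy : ε'' < dist x y := hε''lt _ (Finset.mem_insert_of_mem (Finset.mem_insert_self _ _))
  -- Step B : junction points
  have hp0 : ∀ j : ℕ, ∃ p : X, (j = 0 → p = x) ∧ (1 ≤ j → j ≤ m → p ∈ D (j-1) ∩ D j) ∧
      (j = m + 1 → p = y) := by
    intro j
    rcases Nat.eq_zero_or_pos j with rfl | hj
    · exact ⟨x, fun _ => rfl, fun h1 h2 => absurd h1 (by omega), fun h => absurd h (by omega)⟩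
    by_cases hjm : j ≤ m
    · obtain ⟨w, hw⟩ := link (j-1) (by omega)
      refine ⟨w, fun h => absurd h (by omega), fun _ _ => ?_, fun h => absurd h (by omega)⟩
      have : j - 1 + 1 = j := by omega
      rwa [this] at hw
    · exact ⟨y, fun h => absurd h (by omega), fun h1 h2 => absurd h2 hjm,
        fun _ => rfl⟩
  choose p hpx hpmid hpy using hp0
  have hpin : ∀ j ≤ m, p j ∈ D j ∧ p (j+1) ∈ D j := by
    intro j hj
    constructor
    · rcases Nat.eq_zero_or_pos j with rfl | hj0
      · rw [hpx 0 rfl]; exact hx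
      · exact (hpmid j hj0 hj).2
    · by_cases h : j + 1 ≤ m
      · have h2 := (hpmid (j+1) (by omega) h).1
        simpa using h2
      · have hjm : j = m := by omega
        rw [hjm, hpy (m+1) rfl]; exact hy
  -- Step C : block chains
  have hblock0 : ∀ j : ℕ, ∃ (q : ℕ) (W : ℕ → Set X), j ≤ m →
      ((∀ i ≤ q, IsLink (D j) ε'' (W i)) ∧ (∀ i < q, (W i ∩ W (i+1)).Nonempty) ∧
        p j ∈ W 0 ∧ p (j+1) ∈ W q) := by
    intro j
    by_cases hj : j ≤ m
    · obtain ⟨q, W, h1, h2, h3, h4⟩ := chain_in_open (opn j hj) (conn j hj).isPreconnected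
        (hpin j hj).1 (hpin j hj).2 hε''pos
      exact ⟨q, W, fun _ => ⟨h1, h2, h3, h4⟩⟩
    · exact ⟨0, fun _ => ∅, fun h => absurd h hj⟩
  choose qb Wb hWb using hblock0
  -- Step D : concatenation
  set o : ℕ → ℕ := fun j => ∑ j' ∈ Finset.range j, (qb j' + 1) with ho
  have hosucc : ∀ j, o (j+1) = o j + (qb j + 1) := fun j => Finset.sum_range_succ _ j
  have homono : ∀ ⦃j j'⦄, j < j' → o j < o j' := by
    intro j j' h
    calc o j < o (j+1) := by rw [hosucc]; omega
    _ ≤ o j' := by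
        apply Finset.sum_le_sum_of_subset
        exact Finset.range_subset_range.mpr (by omega)
  have ho0 : o 0 = 0 := rfl
  have hoN : 1 ≤ o (m+1) := by rw [hosucc]; omega
  set N : ℕ := o (m+1) - 1 with hN
  have hNo : o (m+1) = N + 1 := by omega
  set jdx : ℕ → ℕ := fun c => Nat.findGreatest (fun j => o j ≤ c) m with hjdx
  set E : ℕ → Set X := fun c => Wb (jdx c) (c - o (jdx c)) with hE
  have hjdx_le : ∀ c, jdx c ≤ m := fun c => Nat.findGreatest_le m
  have hjdx_spec : ∀ c, o (jdx c) ≤ c := by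
    intro c
    exact Nat.findGreatest_spec (P := fun j => o j ≤ c) (Nat.zero_le m)
      (show o 0 ≤ c by rw [ho0]; exact Nat.zero_le c)
  have hjdx_lt : ∀ c ≤ N, c < o (jdx c + 1) := by
    intro c hc
    have hle := hjdx_le c
    by_cases h : jdx c = m
    · rw [h, hNo]; omega
    · by_contra hcon
      push_neg at hcon
      have := Nat.findGreatest_is_greatest (P := fun j => o j ≤ c)
        (Nat.lt_succ_self (jdx c)) (by omega)
      exact this hcon
  have hjdx_eq : ∀ c j, j ≤ m → o j ≤ c → c < o (j+1) → jdx c = j := by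
    intro c j hjm h1 h2
    have hge : j ≤ jdx c := Nat.le_findGreatest hjm h1
    by_contra hne
    have hlt : j < jdx c := by omega
    have : o (j+1) ≤ o (jdx c) := by
      rcases Nat.eq_or_lt_of_le hlt with he | hl
      · exact le_of_eq (congrArg o he)
      · exact le_of_lt (homono (by omega))
    have := hjdx_spec c
    omega
  have hjdx_mono : ∀ ⦃c c'⦄, c ≤ c' → jdx c ≤ jdx c' := by
    intro c c' hcc
    exact Nat.le_findGreatest (hjdx_le c) ((hjdx_spec c).trans hcc)
  have hoff : ∀ c ≤ N, c - o (jdx c) ≤ qb (jdx c) := by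
    intro c hc
    have h1 := hjdx_lt c hc
    have h2 := hosucc (jdx c)
    have h3 := hjdx_spec c
    omega
  have hElink : ∀ c ≤ N, IsLink (D (jdx c)) ε'' (E c) := by
    intro c hc
    exact ((hWb (jdx c) (hjdx_le c)).1 _ (hoff c hc))
  have hEcons : ∀ c < N, (E c ∩ E (c+1)).Nonempty := by
    intro c hc
    have hcN : c ≤ N := hc.le
    have h1 := hjdx_spec c
    have h2 := hjdx_lt c hcN
    by_cases hcase : c + 1 < o (jdx c + 1)
    · have he : jdx (c+1) = jdx c := hjdx_eq (c+1) (jdx c) (hjdx_le c) (by omega) hcase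
      have hoffc : c + 1 - o (jdx c) = (c - o (jdx c)) + 1 := by omega
      have hlt : c - o (jdx c) < qb (jdx c) := by
        have := hosucc (jdx c); omega
      have := (hWb (jdx c) (hjdx_le c)).2.1 _ hlt
      simp only [hE, he, hoffc]
      exact this
    · have hco : c + 1 = o (jdx c + 1) := by omega
      have hjm : jdx c + 1 ≤ m := by
        by_contra hcon
        have : jdx c = m := by have := hjdx_le c; omega
        rw [this, hNo] at hco
        omega
      have he : jdx (c+1) = jdx c + 1 := by
        refine hjdx_eq (c+1) (jdx c + 1) hjm (by omega) ?_
        calc c + 1 = o (jdx c + 1) := hco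
        _ < o (jdx c + 2) := homono (by omega)
      have hoffc : c - o (jdx c) = qb (jdx c) := by
        have := hosucc (jdx c); omega
      refine ⟨p (jdx c + 1), ?_, ?_⟩
      · simp only [hE, hoffc]
        exact (hWb (jdx c) (hjdx_le c)).2.2.2
      · have e0 : c + 1 - o (jdx c + 1) = 0 := by rw [← hco]; omega
        simp only [hE, he, e0]
        exact (hWb (jdx c + 1) hjm).2.2.1
  have hEx : x ∈ E 0 := by
    have he : jdx 0 = 0 := by
      refine hjdx_eq 0 0 (Nat.zero_le m) (by omega) ?_
      rw [hosucc]; omega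
    simp only [hE, he, ho0]
    have := (hWb 0 (Nat.zero_le m)).2.2.1
    rwa [hpx 0 rfl] at this
  have hEy : y ∈ E N := by
    have hom : o m ≤ N := by
      have := hosucc m; omega
    have he : jdx N = m := by
      refine hjdx_eq N m le_rfl hom (by omega)
    have hoffN : N - o m = qb m := by
      have := hosucc m; omega
    simp only [hE, he, hoffN]
    have := (hWb m le_rfl).2.2.2
    rwa [hpy (m+1) rfl] at this
  -- Step E : extract a simple chain
  obtain ⟨r, σ, hσmono, hσbd, hσx, hσy, hσcons, hσdisj, hσx1, hσy1⟩ := extract hEx hEy hEcons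
  set F : ℕ → Set X := fun c => E (σ c) with hF
  set lbl : ℕ → ℕ := fun c => jdx (σ c) with hlbl
  have hFlink : ∀ c ≤ r, IsLink (D (lbl c)) ε'' (F c) := fun c hc => hElink (σ c) (hσbd c hc)
  have hFsub : ∀ c ≤ r, F c ⊆ D (lbl c) := fun c hc =>
    subset_closure.trans (hFlink c hc).2.2.1
  have hlbl_le : ∀ c, lbl c ≤ m := fun c => hjdx_le _
  have hlblmono : ∀ i < r, lbl i ≤ lbl (i+1) := fun i hi => hjdx_mono (hσmono i hi)
  have hlblmono' := mono_of_steps_le lbl r hlblmono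
  have hlblstep : ∀ c < r, lbl (c+1) = lbl c ∨ lbl (c+1) = lbl c + 1 := by
    intro c hc
    by_contra hcon
    push_neg at hcon
    have hge : lbl c + 2 ≤ lbl (c+1) := by
      have := hlblmono c hc; omega
    obtain ⟨w, hw1, hw2⟩ := hσcons c hc
    have h1 : w ∈ D (lbl c) := hFsub c hc.le hw1
    have h2 : w ∈ D (lbl (c+1)) := hFsub (c+1) hc hw2
    have := sep (lbl c) (lbl (c+1)) hge (hlbl_le _)
    exact absurd this (by
      refine Set.nonempty_iff_ne_empty.mp ⟨w, subset_closure h1, subset_closure h2⟩)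
  have hlbl0 : lbl 0 = 0 := by
    by_contra hcon
    have h1 : 1 ≤ lbl 0 := by omega
    have h2 : x ∈ D (lbl 0) := hFsub 0 (Nat.zero_le r) hσx
    exact hx' (lbl 0) h1 (hlbl_le 0) (subset_closure h2)
  have hlblr : lbl r = m := by
    by_contra hcon
    have h1 : lbl r + 1 ≤ m := by have := hlbl_le r; omega
    have h2 : y ∈ D (lbl r) := hFsub r le_rfl hσy
    exact hy' (lbl r) h1 (subset_closure h2)
  -- junction points of the extracted chain
  have hz0 : ∀ c : ℕ, ∃ w, c < r → w ∈ F c ∩ F (c+1) := by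
    intro c
    by_cases h : c < r
    · obtain ⟨w, hw⟩ := hσcons c h; exact ⟨w, fun _ => hw⟩
    · exact ⟨x, fun h' => absurd h' h⟩
  choose z hz using hz0
  set az : ℕ → X := fun c => if c = 0 then x else z (c-1) with haz
  set bz : ℕ → X := fun c => if c = r then y else z c with hbz
  have hazF : ∀ c ≤ r, az c ∈ F c := by
    intro c hc
    rcases Nat.eq_zero_or_pos c with rfl | hc0
    · simpa [haz] using hσx
    · have h1 := (hz (c-1) (by omega)).2
      have e : c - 1 + 1 = c := by omega
      rw [e] at h1
      simpa [haz, Nat.pos_iff_ne_zero.mp hc0] using h1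
  have hbzF : ∀ c ≤ r, bz c ∈ F c := by
    intro c hc
    by_cases hcr : c = r
    · subst hcr; simpa [hbz] using hσy
    · have h1 := (hz c (by omega)).1
      simpa [hbz, hcr] using h1
  -- inner chains and the refined links
  have hsub0 : ∀ c : ℕ, ∃ (qc : ℕ) (V : ℕ → Set X), c ≤ r →
      ((∀ i ≤ qc, IsLink (F c) ε'' (V i)) ∧ (∀ i < qc, (V i ∩ V (i+1)).Nonempty) ∧
        az c ∈ V 0 ∧ bz c ∈ V qc) := by
    intro c
    by_cases h : c ≤ r
    · obtain ⟨qc, V, h1, h2, h3, h4⟩ := chain_in_open (X := X) (hFlink c h).1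
        ((hFlink c h).2.1).isPreconnected (hazF c h) (hbzF c h) hε''pos
      exact ⟨qc, V, fun _ => ⟨h1, h2, h3, h4⟩⟩
    · exact ⟨0, fun _ => ∅, fun h' => absurd h' h⟩
  choose qq V hV using hsub0
  set Afn : ℕ → Set X := fun c => ⋃ i ∈ Finset.range (qq c + 1), V c i with hAfn
  have hAopen : ∀ c ≤ r, IsOpen (Afn c) := by
    intro c hc
    exact isOpen_biUnion fun i hi =>
      (((hV c hc).1 i (by simpa using Nat.lt_succ_iff.mp (Finset.mem_range.mp hi))).1)
  have hAconn : ∀ c ≤ r, IsConnected (Afn c) := by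
    intro c hc
    exact chain_union_connected (V c) (qq c)
      (fun i hi => ((hV c hc).1 i hi).2.1) ((hV c hc).2.1)
  have hAcl : ∀ c ≤ r, closure (Afn c) ⊆ F c := by
    intro c hc
    rw [hAfn]
    rw [Finset.closure_biUnion]
    exact Set.iUnion₂_subset fun i hi =>
      ((hV c hc).1 i (Nat.lt_succ_iff.mp (Finset.mem_range.mp hi))).2.2.1
  have hAsubF : ∀ c ≤ r, Afn c ⊆ F c := fun c hc => subset_closure.trans (hAcl c hc)
  have hAdiam : ∀ c ≤ r, diam (Afn c) ≤ ε'' := by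
    intro c hc
    exact le_trans (diam_mono (hAsubF c hc) (bounded_all _)) (hFlink c hc).2.2.2
  have hAaz : ∀ c ≤ r, az c ∈ Afn c := by
    intro c hc
    exact Set.mem_biUnion (Finset.mem_range.mpr (by omega)) (hV c hc).2.2.1
  have hAbz : ∀ c ≤ r, bz c ∈ Afn c := by
    intro c hc
    exact Set.mem_biUnion (Finset.mem_range.mpr (Nat.lt_succ_self _)) (hV c hc).2.2.2
  -- assemble
  refine ⟨⟨r, Afn⟩, lbl, ⟨hAopen, hAconn, fun i hi => (hAdiam i hi).trans hε''ε'.le,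
      ?_, ?_, ?_, ?_, ?_, ?_⟩, ⟨hlbl0, hlblr, hlblstep, fun c hc => (hAcl c hc).trans (hFsub c hc), ?_⟩⟩
  · -- link
    intro c hc
    dsimp only at hc ⊢
    refine ⟨z c, ?_, ?_⟩
    · have hcr : c ≠ r := by omega
      have h1 := hAbz c hc.le
      simp only [hbz, if_neg hcr] at h1
      exact h1
    · have h1 := hAaz (c+1) hc
      simp only [haz, if_neg (Nat.succ_ne_zero c), Nat.add_sub_cancel] at h1
      exact h1
  · -- sep
    intro i j hij hjr
    dsimp only at hjr ⊢
    have h1 : closure (Afn i) ∩ closure (Afn j) ⊆ F i ∩ F j :=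
      Set.inter_subset_inter (hAcl i (by omega)) (hAcl j hjr)
    have h2 := hσdisj i j hij hjr
    exact Set.subset_empty_iff.mp (h2 ▸ h1)
  · -- hx
    show x ∈ Afn 0
    have h1 := hAaz 0 (Nat.zero_le r)
    simpa [haz] using h1
  · -- hy
    show y ∈ Afn r
    have h1 := hAbz r le_rfl
    simpa [hbz] using h1
  · -- hx'
    intro c hc1 hcr hmem
    dsimp only at hcr hmem
    have : x ∈ F c := hAcl c hcr hmem
    have := hσx1 c hcr this
    omega
  · -- hy'
    intro c hc1 hmem
    dsimp only at hc1 hmem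
    have : y ∈ F c := hAcl c (by omega) hmem
    have := hσy1 c (by omega) this
    omega
  · -- bfib
    intro j hj
    dsimp only at hj ⊢
    by_contra hno
    push_neg at hno
    obtain ⟨c₀, hc₀r, hc₀⟩ := nat_ivt lbl r hlblstep j (by rw [hlbl0]; omega)
      (by rw [hlblr]; exact hj)
    have huniq : ∀ c ≤ r, lbl c = j → c = c₀ := by
      intro c hc hcj
      by_contra hne
      rcases lt_or_gt_of_ne hne with h | h
      · have h1 : lbl (c+1) ≤ j := by
          have := hlblmono' (show c+1 ≤ c₀ by omega) hc₀r; omega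
        have h2 : j ≤ lbl (c+1) := by
          have := hlblmono c (by omega); omega
        exact hno c (by omega) hcj (by omega)
      · have h1 : lbl (c₀+1) ≤ j := by
          have := hlblmono' (show c₀+1 ≤ c by omega) hc; omega
        have h2 : j ≤ lbl (c₀+1) := by
          have := hlblmono c₀ (by omega); omega
        exact hno c₀ (by omega) hc₀ (by omega)
    rcases Nat.eq_zero_or_pos m with hm0 | hm1
    · -- m = 0
      have hj0 : j = 0 := by omega
      have hr0 : r = 0 := by
        have e1 : (0:ℕ) = c₀ := huniq 0 (Nat.zero_le r) (by omega)
        have e2 : r = c₀ := huniq r le_rfl (by omega)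
        omega
      have h1 : dist x y ≤ diam (F 0) := by
        refine dist_le_diam_of_mem (bounded_all _) hσx ?_
        rw [hr0] at hσy
        exact hσy
      have h2 : diam (F 0) ≤ ε'' := (hFlink 0 (Nat.zero_le r)).2.2.2
      linarith [hKxy]
    by_cases hj0 : j = 0
    · -- j = 0 < m
      subst hj0
      have hc₀0 : (0:ℕ) = c₀ := huniq 0 (Nat.zero_le r) hlbl0
      have hr1 : 1 ≤ r := by
        rcases Nat.eq_zero_or_pos r with hr0 | h
        · exfalso; rw [hr0] at hlblr; rw [hlbl0] at hlblr; omega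
        · exact h
      have hlbl1 : lbl 1 = 1 := by
        rcases hlblstep 0 (by omega) with h | h
        · exfalso
          have := huniq 1 hr1 (by rw [h, hlbl0])
          omega
        · rw [h, hlbl0]
      obtain ⟨hw1, hw2⟩ := hz 0 (by omega)
      have hdw : dist x (z 0) ≤ diam (F 0) :=
        dist_le_diam_of_mem (bounded_all _) hσx hw1
      have hdF : diam (F 0) ≤ ε'' := (hFlink 0 (Nat.zero_le r)).2.2.2
      have hwD : z 0 ∈ D 1 := by
        have := hFsub 1 hr1 hw2
        rwa [hlbl1] at this
      have := hKx 1 le_rfl hm1 (z 0) hwD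
      linarith
    by_cases hjm : j = m
    · -- j = m ≥ 1
      rw [hjm] at hno huniq hc₀
      have hc₀r' : r = c₀ := huniq r le_rfl hlblr
      have hr1 : 1 ≤ r := by
        rcases Nat.eq_zero_or_pos r with hr0 | h
        · exfalso; rw [hr0] at hlblr; rw [hlbl0] at hlblr; omega
        · exact h
      have hlblr1 : lbl (r-1) = m - 1 := by
        have e : r - 1 + 1 = r := by omega
        rcases hlblstep (r-1) (by omega) with h | h
        · exfalso
          rw [e, hlblr] at h
          have := huniq (r-1) (by omega) h.symm
          omega
        · rw [e, hlblr] at h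
          omega
      obtain ⟨hw1, hw2⟩ := hz (r-1) (by omega)
      have e : r - 1 + 1 = r := by omega
      rw [e] at hw2
      have hdw : dist y (z (r-1)) ≤ diam (F r) :=
        dist_le_diam_of_mem (bounded_all _) hσy hw2
      have hdF : diam (F r) ≤ ε'' := (hFlink r le_rfl).2.2.2
      have hwD : z (r-1) ∈ D (m-1) := by
        have := hFsub (r-1) (by omega) hw1
        rwa [hlblr1] at this
      have := hKy (m-1) (by omega) (z (r-1)) hwD
      linarith
    · -- 0 < j < m
      have hj1 : 1 ≤ j := by omega
      have hjm1 : j + 1 ≤ m := by omega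
      have hc₀1 : 1 ≤ c₀ := by
        rcases Nat.eq_zero_or_pos c₀ with h0 | h
        · exfalso; rw [h0] at hc₀; rw [hlbl0] at hc₀; omega
        · exact h
      have hc₀r2 : c₀ < r := by
        rcases Nat.eq_or_lt_of_le hc₀r with h0 | h
        · exfalso; rw [h0, hlblr] at hc₀; omega
        · exact h
      have hlblc1 : lbl (c₀+1) = j + 1 := by
        rcases hlblstep c₀ hc₀r2 with h | h
        · exfalso
          have := huniq (c₀+1) hc₀r2 (by rw [h, hc₀])
          omega
        · rw [h, hc₀]
      have hlblc0 : lbl (c₀-1) = j - 1 := by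
        have e : c₀ - 1 + 1 = c₀ := by omega
        rcases hlblstep (c₀-1) (by omega) with h | h
        · exfalso
          rw [e, hc₀] at h
          have := huniq (c₀-1) (by omega) h.symm
          omega
        · rw [e, hc₀] at h
          omega
      obtain ⟨hw1, hw2⟩ := hz (c₀-1) (by omega)
      have e : c₀ - 1 + 1 = c₀ := by omega
      rw [e] at hw2
      obtain ⟨hw1', hw2'⟩ := hz c₀ hc₀r2
      have hdw : dist (z (c₀-1)) (z c₀) ≤ diam (F c₀) :=
        dist_le_diam_of_mem (bounded_all _) hw2 hw1'
      have hdF : diam (F c₀) ≤ ε'' := (hFlink c₀ hc₀r2.le).2.2.2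
      have hwD1 : z (c₀-1) ∈ D (j-1) := by
        have := hFsub (c₀-1) (by omega) hw1
        rwa [hlblc0] at this
      have hwD2 : z c₀ ∈ D (j+1) := by
        have := hFsub (c₀+1) hc₀r2 hw2'
        rwa [hlblc1] at this
      have := hKf (j-1) (j+1) (by omega) (by omega) (z (c₀-1)) hwD1 (z c₀) hwD2
      linarith
end Refine

section Seq
variable {X : Type*} [MetricSpace X] [CompactSpace X] [ConnectedSpace X] [LocallyConnectedSpace X]

lemma exists_chain_seq {x y : X} (hxy : x ≠ y) :
    ∃ (CC : ℕ → Chn X) (bb : ℕ → ℕ → ℕ),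
      (∀ n, Good x y ((diam (univ : Set X) + 1) * (1/2)^n) (CC n)) ∧
      (∀ n, Refines (CC (n+1)) (CC n) (bb n)) ∧ (CC 0).m = 0 := by
  classical
  set e : ℕ → ℝ := fun n => (diam (univ : Set X) + 1) * (1/2)^n with he
  have hepos : ∀ n, 0 < e n := by
    intro n
    have h1 := diam_nonneg (s := (univ : Set X))
    have h2 : (0:ℝ) < (1/2)^n := by positivity
    rw [he]; positivity
  have hbase : Good x y (e 0) ⟨0, fun _ => (univ : Set X)⟩ := by
    refine ⟨fun i _ => isOpen_univ, fun i _ => isConnected_univ, ?_, ?_, ?_, mem_univ x,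
      mem_univ y, ?_, ?_⟩
    · intro i _
      show diam (univ : Set X) ≤ e 0
      rw [he]; simp
    · intro i hi; exact absurd hi (Nat.not_lt_zero i)
    · intro i j hij hj; dsimp only at hj; omega
    · intro i hi1 hi2; dsimp only at hi2; omega
    · intro i hi; dsimp only at hi; omega
  have hstep : ∀ n (C : Chn X), Good x y (e n) C →
      ∃ C', ∃ b, Good x y (e (n+1)) C' ∧ Refines C' C b := fun n C hC =>
    refine hxy hC (hepos (n+1))
  set T : ℕ → Type _ := fun n => {C : Chn X // Good x y (e n) C} with hT
  set f : ∀ n, T n := fun n => Nat.rec (⟨⟨0, fun _ => (univ : Set X)⟩, hbase⟩ : T 0)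
    (fun k prev => ⟨(hstep k prev.1 prev.2).choose,
      ((hstep k prev.1 prev.2).choose_spec).choose_spec.1⟩) n with hf
  refine ⟨fun n => (f n).1, fun n => ((hstep n (f n).1 (f n).2).choose_spec).choose,
    fun n => (f n).2, fun n => ?_, rfl⟩
  exact ((hstep n (f n).1 (f n).2).choose_spec).choose_spec.2

end Seq

section Main
variable {X : Type*} [MetricSpace X] [CompactSpace X] [ConnectedSpace X] [LocallyConnectedSpace X]

/-- ℝ-valued monotonicity from adjacent steps -/
lemma rmono_of_steps (f : ℕ → ℝ) (r : ℕ) (hstep : ∀ i < r, f i ≤ f (i+1)) :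
    ∀ ⦃c c'⦄, c ≤ c' → c' ≤ r → f c ≤ f c' := by
  intro c c' hcc' hc'
  induction c' with
  | zero => obtain rfl : c = 0 := Nat.le_zero.mp hcc'; exact le_rfl
  | succ d ih =>
    rcases Nat.eq_or_lt_of_le hcc' with rfl | h
    · exact le_refl _
    · exact (ih (by omega) (by omega)).trans (hstep d (by omega))

theorem peano_arc {x y : X} (hxy : x ≠ y) :
    ∃ γ : ℝ → X, ContinuousOn γ (Set.Icc 0 1) ∧ Set.InjOn γ (Set.Icc 0 1) ∧
      γ 0 = x ∧ γ 1 = y := by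
  classical
  obtain ⟨CC, bb, hG, hR, hm00⟩ := exists_chain_seq hxy
  set e : ℕ → ℝ := fun n => (diam (univ : Set X) + 1) * (1/2)^n with he
  have hepos : ∀ n, 0 < e n := by
    intro n
    have h1 := diam_nonneg (s := (univ : Set X))
    have h2 : (0:ℝ) < (1/2)^n := by positivity
    rw [he]; positivity
  set m : ℕ → ℕ := fun n => (CC n).m with hm
  set D : ℕ → ℕ → Set X := fun n => (CC n).D with hD
  -- basic chain facts
  have hDopn : ∀ n i, i ≤ m n → IsOpen (D n i) := fun n i hi => (hG n).opn i hi
  have hDne : ∀ n i, i ≤ m n → (D n i).Nonempty := fun n i hi => ((hG n).conn i hi).nonempty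
  have hDdiam : ∀ n i, i ≤ m n → diam (D n i) ≤ e n := fun n i hi => (hG n).small i hi
  have hDlink : ∀ n i, i < m n → (D n i ∩ D n (i+1)).Nonempty := fun n i hi => (hG n).link i hi
  have hDsep : ∀ n i j, i + 2 ≤ j → j ≤ m n → closure (D n i) ∩ closure (D n j) = ∅ :=
    fun n i j h1 h2 => (hG n).sep i j h1 h2
  have hDx : ∀ n, x ∈ D n 0 := fun n => (hG n).hx
  have hDy : ∀ n, y ∈ D n (m n) := fun n => (hG n).hy
  have hb0 : ∀ n, bb n 0 = 0 := fun n => (hR n).b0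
  have hblast : ∀ n, bb n (m (n+1)) = m n := fun n => (hR n).blast
  have hbstep : ∀ n c, c < m (n+1) → bb n (c+1) = bb n c ∨ bb n (c+1) = bb n c + 1 :=
    fun n c hc => (hR n).bstep c hc
  have hbsub : ∀ n c, c ≤ m (n+1) → closure (D (n+1) c) ⊆ D n (bb n c) :=
    fun n c hc => (hR n).bsub c hc
  have hbfib : ∀ n j, j ≤ m n → ∃ c, c + 1 ≤ m (n+1) ∧ bb n c = j ∧ bb n (c+1) = j :=
    fun n j hj => (hR n).bfib j hj
  have hbmono : ∀ n, ∀ ⦃c c'⦄, c ≤ c' → c' ≤ m (n+1) → bb n c ≤ bb n c' :=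
    fun n => mono_of_steps (bb n) (m (n+1)) (fun i hi => hbstep n i hi)
  have hble : ∀ n c, c ≤ m (n+1) → bb n c ≤ m n := by
    intro n c hc
    have := hbmono n hc le_rfl
    rwa [hblast n] at this
  -- fiber start function
  set sfib : ℕ → ℕ → ℕ := fun n j =>
    if h : ∃ c, c ≤ m (n+1) ∧ j ≤ bb n c then Nat.find h else m (n+1) + 1 with hsfib
  have hsfib_ex : ∀ n j, j ≤ m n → ∃ c, c ≤ m (n+1) ∧ j ≤ bb n c := by
    intro n j hj
    exact ⟨m (n+1), le_rfl, by rw [hblast n]; exact hj⟩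
  have hsfib_le : ∀ n j, j ≤ m n → sfib n j ≤ m (n+1) := by
    intro n j hj
    simp only [hsfib]
    rw [dif_pos (hsfib_ex n j hj)]
    exact (Nat.find_spec (hsfib_ex n j hj)).1
  have hsfib_ge : ∀ n j, j ≤ m n → j ≤ bb n (sfib n j) := by
    intro n j hj
    simp only [hsfib]
    rw [dif_pos (hsfib_ex n j hj)]
    exact (Nat.find_spec (hsfib_ex n j hj)).2
  have hsfib_min : ∀ n j c, c ≤ m (n+1) → j ≤ bb n c → sfib n j ≤ c := by
    intro n j c hc hjc
    have hex : ∃ c, c ≤ m (n+1) ∧ j ≤ bb n c := ⟨c, hc, hjc⟩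
    simp only [hsfib]; rw [dif_pos hex]
    exact Nat.find_min' hex ⟨hc, hjc⟩
  have hsfib0 : ∀ n, sfib n 0 = 0 := by
    intro n
    have := hsfib_min n 0 0 (Nat.zero_le _) (Nat.zero_le _)
    omega
  have hsfib_bb : ∀ n j, j ≤ m n → bb n (sfib n j) = j := by
    intro n j hj
    have h1 := hsfib_ge n j hj
    rcases Nat.eq_zero_or_pos j with rfl | hj1
    · rw [hsfib0 n, hb0 n]
    · by_contra hne
      have h2 : j + 1 ≤ bb n (sfib n j) := by omega
      have h3 : 1 ≤ sfib n j := by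
        by_contra h
        have h4 : sfib n j = 0 := by omega
        rw [h4, hb0 n] at h1; omega
      have hex : ∃ c, c ≤ m (n+1) ∧ j ≤ bb n c := hsfib_ex n j hj
      have h5 : ¬ (sfib n j - 1 ≤ m (n+1) ∧ j ≤ bb n (sfib n j - 1)) := by
        have := Nat.find_min hex (m := sfib n j - 1) (by
          simp only [hsfib] at h3 ⊢
          rw [dif_pos hex] at h3 ⊢
          omega)
        simpa using this
      have h6 : sfib n j - 1 ≤ m (n+1) := le_trans (by omega) (hsfib_le n j hj)
      have h7 : bb n (sfib n j - 1) < j := by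
        by_contra h; push_neg at h
        exact h5 ⟨h6, h⟩
      have h8 := hbstep n (sfib n j - 1) (by
        have := hsfib_le n j hj; omega)
      have e1 : sfib n j - 1 + 1 = sfib n j := by omega
      rw [e1] at h8
      omega
  have hsfib_top : ∀ n, sfib n (m n + 1) = m (n+1) + 1 := by
    intro n
    have hnex : ¬ ∃ c, c ≤ m (n+1) ∧ m n + 1 ≤ bb n c := by
      rintro ⟨c, hc1, hc2⟩
      have := hble n c hc1
      omega
    simp only [hsfib]; rw [dif_neg hnex]
  have hsfib_mono : ∀ n j j', j ≤ j' → sfib n j ≤ sfib n j' := by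
    intro n j j' hjj
    by_cases h' : ∃ c, c ≤ m (n+1) ∧ j' ≤ bb n c
    · have h1 : sfib n j' ≤ m (n+1) := by
        simp only [hsfib]; rw [dif_pos h']
        exact (Nat.find_spec h').1
      have h2 : j' ≤ bb n (sfib n j') := by
        simp only [hsfib]; rw [dif_pos h']
        exact (Nat.find_spec h').2
      exact hsfib_min n j (sfib n j') h1 (by omega)
    · have h1 : sfib n j' = m (n+1) + 1 := by simp only [hsfib]; rw [dif_neg h']
      rw [h1]
      by_cases h : ∃ c, c ≤ m (n+1) ∧ j ≤ bb n c
      · obtain ⟨c, hc1, hc2⟩ := h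
        have := hsfib_min n j c hc1 hc2
        omega
      · simp only [hsfib]; rw [dif_neg h]
  have hs_lb : ∀ n c, c ≤ m (n+1) → sfib n (bb n c) ≤ c :=
    fun n c hc => hsfib_min n (bb n c) c hc le_rfl
  have hs_ub : ∀ n c, c ≤ m (n+1) → c < sfib n (bb n c + 1) := by
    intro n c hc
    by_contra h
    push_neg at h
    by_cases hj : bb n c + 1 ≤ m n
    · have h1 := hsfib_bb n (bb n c + 1) hj
      have h2 : sfib n (bb n c + 1) ≤ m (n+1) := hsfib_le n _ hj
      have h3 := hbmono n h hc
      rw [h1] at h3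
      omega
    · have hj2 : bb n c + 1 = m n + 1 := by
        have := hble n c hc; omega
      rw [hj2, hsfib_top n] at h
      omega
  have hk2 : ∀ n j, j ≤ m n → sfib n j + 2 ≤ sfib n (j+1) := by
    intro n j hj
    obtain ⟨c, hc1, hc2, hc3⟩ := hbfib n j hj
    have h1 : sfib n j ≤ c := hsfib_min n j c (by omega) (by omega)
    have h2 : c + 2 ≤ sfib n (j+1) := by
      by_contra h
      push_neg at h
      have h3 : sfib n (j+1) ≤ c + 1 := by omega
      by_cases hjm : j + 1 ≤ m n
      · have h4 := hsfib_bb n (j+1) hjm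
        have h5 := hbmono n h3 hc1
        rw [h4] at h5
        omega
      · have hj2 : j + 1 = m n + 1 := by omega
        rw [hj2, hsfib_top n] at h3
        omega
    omega
  -- subdivision of [0,1]
  set k : ℕ → ℕ → ℕ := fun n j => sfib n (j+1) - sfib n j with hkdef
  set u : ℕ → ℕ → ℝ := fun n => Nat.rec (motive := fun _ => ℕ → ℝ)
    (fun j => if j = 0 then (0:ℝ) else 1)
    (fun p up c => if c = m (p+1) + 1 then (1:ℝ) else
      up (bb p c) + (((c - sfib p (bb p c) : ℕ) : ℝ) / ((k p (bb p c)) : ℝ)) *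
        (up (bb p c + 1) - up (bb p c))) n with hudef
  have hu0 : ∀ j, u 0 j = if j = 0 then (0:ℝ) else 1 := fun _ => rfl
  have husucc : ∀ p c, u (p+1) c = if c = m (p+1) + 1 then (1:ℝ) else
      u p (bb p c) + (((c - sfib p (bb p c) : ℕ) : ℝ) / ((k p (bb p c)) : ℝ)) *
        (u p (bb p c + 1) - u p (bb p c)) := fun _ _ => rfl
  -- alignment of subdivision points
  have halign : ∀ n, u n (m n + 1) = 1 → ∀ j, j ≤ m n + 1 → u (n+1) (sfib n j) = u n j := by
    intro n htop j hj
    rcases Nat.eq_or_lt_of_le hj with hje | hjlt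
    · rw [hje, hsfib_top n, husucc, if_pos rfl, htop]
    · have hjm : j ≤ m n := by omega
      have h1 : sfib n j ≤ m (n+1) := hsfib_le n j hjm
      rw [husucc, if_neg (by omega), hsfib_bb n j hjm, Nat.sub_self]
      simp
  -- interval lengths after refinement
  have hlen : ∀ n, u n (m n + 1) = 1 → ∀ c, c ≤ m (n+1) → u (n+1) (c+1) - u (n+1) c
        = (u n (bb n c + 1) - u n (bb n c)) / ((k n (bb n c)) : ℝ) := by
    intro n htop c hc
    have hjm : bb n c ≤ m n := hble n c hc
    have hlb : sfib n (bb n c) ≤ c := hs_lb n c hc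
    have hub : c < sfib n (bb n c + 1) := hs_ub n c hc
    have hk : 2 ≤ k n (bb n c) := by
      have := hk2 n (bb n c) hjm; simp only [hkdef]; omega
    have hkR : (0:ℝ) < ((k n (bb n c)) : ℝ) := by
      exact_mod_cast Nat.pos_of_ne_zero (by omega)
    have hucf : u (n+1) c = u n (bb n c) +
        ((c - sfib n (bb n c) : ℕ) : ℝ)/((k n (bb n c)) : ℝ) *
          (u n (bb n c + 1) - u n (bb n c)) := by
      rw [husucc, if_neg (by omega)]
    rcases Nat.lt_or_ge (c+1) (sfib n (bb n c + 1)) with hcase | hcase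
    · have hc1 : c + 1 ≤ m (n+1) := by
        have h1 : sfib n (bb n c + 1) ≤ m (n+1) + 1 := by
          by_cases h2 : bb n c + 1 ≤ m n
          · exact (hsfib_le n (bb n c + 1) h2).trans (by omega)
          · have h3 : bb n c + 1 = m n + 1 := by omega
            rw [h3, hsfib_top n]
        omega
      have hbc1 : bb n (c+1) = bb n c := by
        have h1 : bb n c ≤ bb n (c+1) := hbmono n (Nat.le_succ c) hc1
        by_contra hne
        have h2 : bb n c + 1 ≤ bb n (c+1) := by
          have := hbstep n c (by omega); omega
        have := hsfib_min n (bb n c + 1) (c+1) hc1 h2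
        omega
      have huc1 : u (n+1) (c+1) = u n (bb n c) +
          ((c + 1 - sfib n (bb n c) : ℕ) : ℝ)/((k n (bb n c)) : ℝ) *
            (u n (bb n c + 1) - u n (bb n c)) := by
        rw [husucc, if_neg (by omega), hbc1]
      rw [huc1, hucf]
      have hcast : ((c + 1 - sfib n (bb n c) : ℕ) : ℝ)
          = ((c - sfib n (bb n c) : ℕ) : ℝ) + 1 := by
        have h5 : c + 1 - sfib n (bb n c) = (c - sfib n (bb n c)) + 1 := by omega
        rw [h5]; push_cast; ring
      rw [hcast]; field_simp; ring
    · have hceq : c + 1 = sfib n (bb n c + 1) := by omega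
      have hcs : (c - sfib n (bb n c) : ℕ) = k n (bb n c) - 1 := by
        simp only [hkdef]; omega
      have h2 : u (n+1) (c+1) = u n (bb n c + 1) := by
        rw [hceq]; exact halign n htop (bb n c + 1) (by omega)
      rw [h2, hucf, hcs]
      have hkcast : ((k n (bb n c) - 1 : ℕ) : ℝ) = ((k n (bb n c)) : ℝ) - 1 := by
        have h6 : 1 ≤ k n (bb n c) := by omega
        rw [Nat.cast_sub h6]; simp
      rw [hkcast]; field_simp; ring
  -- the invariant
  have hInv : ∀ n, (u n 0 = 0 ∧ u n (m n + 1) = 1) ∧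
      ∀ j, j ≤ m n → (0 < u n (j+1) - u n j ∧ u n (j+1) - u n j ≤ (1/2)^n) := by
    intro n
    induction n with
    | zero =>
      have hm0 : m 0 = 0 := hm00
      refine ⟨⟨by rw [hu0]; simp, by rw [hu0]; simp⟩, ?_⟩
      intro j hj
      have hj0 : j = 0 := by omega
      subst hj0
      rw [hu0, hu0]
      norm_num
    | succ n ih =>
      obtain ⟨⟨h00, htop⟩, hlens⟩ := ih
      refine ⟨⟨?_, ?_⟩, ?_⟩
      · rw [husucc, if_neg (by omega), hb0 n, hsfib0 n]
        simp [h00]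
      · rw [husucc, if_pos rfl]
      · intro c hcm
        rw [hlen n htop c hcm]
        have hjm : bb n c ≤ m n := hble n c hcm
        obtain ⟨hL1, hL2⟩ := hlens (bb n c) hjm
        have hk : 2 ≤ k n (bb n c) := by
          have := hk2 n (bb n c) hjm; simp only [hkdef]; omega
        have hkR : (2:ℝ) ≤ ((k n (bb n c)) : ℝ) := by exact_mod_cast hk
        constructor
        · apply div_pos hL1; linarith
        · calc (u n (bb n c + 1) - u n (bb n c)) / ((k n (bb n c)) : ℝ)
              ≤ (u n (bb n c + 1) - u n (bb n c)) / 2 := by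
                apply div_le_div_of_nonneg_left hL1.le (by norm_num) hkR
            _ ≤ (1/2)^n / 2 := by linarith
            _ = (1/2)^(n+1) := by rw [pow_succ]; ring
  have humono : ∀ n, ∀ ⦃c c'⦄, c ≤ c' → c' ≤ m n + 1 → u n c ≤ u n c' := by
    intro n
    refine rmono_of_steps (u n) (m n + 1) ?_
    intro i hi
    have := ((hInv n).2 i (by omega)).1
    linarith
  -- index of the interval containing t
  set idx : ℕ → ℝ → ℕ := fun n t => Nat.findGreatest (fun j => u n j ≤ t) (m n) with hidxdef
  have hidx_le : ∀ n t, idx n t ≤ m n := fun n t => Nat.findGreatest_le (m n)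
  have hidx_spec : ∀ n t, 0 ≤ t → u n (idx n t) ≤ t := by
    intro n t ht
    exact Nat.findGreatest_spec (P := fun j => u n j ≤ t) (Nat.zero_le (m n))
      (show u n 0 ≤ t by rw [(hInv n).1.1]; exact ht)
  have hidx_ge : ∀ n t j, j ≤ m n → u n j ≤ t → j ≤ idx n t :=
    fun n t j hj hu => Nat.le_findGreatest hj hu
  have hidx_gt : ∀ n t j, j ≤ m n → idx n t < j → ¬ u n j ≤ t :=
    fun n t j hj h => Nat.findGreatest_is_greatest h hj
  have hidx_mono : ∀ n s t, 0 ≤ s → s ≤ t → idx n s ≤ idx n t :=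
    fun n s t hs hst => hidx_ge n t _ (hidx_le n s) ((hidx_spec n s hs).trans hst)
  have hidx_ub : ∀ n t, t ≤ 1 → t ≤ u n (idx n t + 1) := by
    intro n t ht
    by_cases h : idx n t = m n
    · rw [h, (hInv n).1.2]; exact ht
    · have h2 := hidx_gt n t (idx n t + 1) (by have := hidx_le n t; omega) (by omega)
      linarith [not_le.mp h2]
  -- compatibility of indices across levels
  have hcompat : ∀ n t, 0 ≤ t → bb n (idx (n+1) t) = idx n t := by
    intro n t ht
    have hcm : idx (n+1) t ≤ m (n+1) := hidx_le (n+1) t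
    have hjm : bb n (idx (n+1) t) ≤ m n := hble n _ hcm
    have h1 : u n (bb n (idx (n+1) t)) ≤ t := by
      have e1 : u (n+1) (sfib n (bb n (idx (n+1) t))) = u n (bb n (idx (n+1) t)) :=
        halign n (hInv n).1.2 _ (by omega)
      have e2 : u (n+1) (sfib n (bb n (idx (n+1) t))) ≤ u (n+1) (idx (n+1) t) :=
        humono (n+1) (hs_lb n _ hcm) (by omega)
      have e3 : u (n+1) (idx (n+1) t) ≤ t := hidx_spec (n+1) t ht
      linarith
    have h2 : bb n (idx (n+1) t) ≤ idx n t := hidx_ge n t _ hjm h1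
    by_contra hne
    have h3 : bb n (idx (n+1) t) + 1 ≤ idx n t := by omega
    have h4 : bb n (idx (n+1) t) + 1 ≤ m n := le_trans h3 (hidx_le n t)
    have h5 : u n (bb n (idx (n+1) t) + 1) ≤ t :=
      le_trans (humono n h3 (by have := hidx_le n t; omega)) (hidx_spec n t ht)
    have h6 : u (n+1) (sfib n (bb n (idx (n+1) t) + 1)) ≤ t := by
      rw [halign n (hInv n).1.2 _ (by omega)]; exact h5
    have h7 : sfib n (bb n (idx (n+1) t) + 1) ≤ idx (n+1) t :=
      hidx_ge (n+1) t _ (hsfib_le n _ h4) h6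
    have h8 := hs_ub n (idx (n+1) t) hcm
    omega
  -- the nested compacta and the curve
  have hnested : ∀ t : ℝ, 0 ≤ t → ∀ n,
      closure (D (n+1) (idx (n+1) t)) ⊆ closure (D n (idx n t)) := by
    intro t ht n
    have h1 : closure (D (n+1) (idx (n+1) t)) ⊆ D n (bb n (idx (n+1) t)) :=
      hbsub n _ (hidx_le (n+1) t)
    rw [hcompat n t ht] at h1
    exact h1.trans subset_closure
  have hTne : ∀ t : ℝ, 0 ≤ t → (⋂ n, closure (D n (idx n t))).Nonempty := by
    intro t ht
    exact IsCompact.nonempty_iInter_of_sequence_nonempty_isCompact_isClosed _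
      (hnested t ht) (fun n => ((hDne n _ (hidx_le n t)).mono subset_closure))
      (isClosed_closure.isCompact) (fun n => isClosed_closure)
  set pt : ℝ → X := fun t =>
    if h : (⋂ n, closure (D n (idx n t))).Nonempty then h.some else x with hptdef
  have hpt : ∀ t : ℝ, 0 ≤ t → ∀ n, pt t ∈ closure (D n (idx n t)) := by
    intro t ht n
    have h := hTne t ht
    simp only [hptdef]
    rw [dif_pos h]
    exact Set.mem_iInter.mp h.some_mem n
  set clm : ℝ → ℝ := fun t => max 0 (min 1 t) with hclm
  have hclid : ∀ t ∈ Icc (0:ℝ) 1, clm t = t := by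
    intro t ht
    simp only [hclm]
    rw [min_eq_right ht.2, max_eq_right ht.1]
  set γ : ℝ → X := fun t => pt (clm t) with hγdef
  have hγmem : ∀ t ∈ Icc (0:ℝ) 1, ∀ n, γ t ∈ closure (D n (idx n t)) := by
    intro t ht n
    simp only [hγdef]
    rw [hclid t ht]
    exact hpt t ht.1 n
  have hγopen : ∀ t ∈ Icc (0:ℝ) 1, ∀ n, γ t ∈ D n (idx n t) := by
    intro t ht n
    have h1 := hγmem t ht (n+1)
    have h2 : closure (D (n+1) (idx (n+1) t)) ⊆ D n (bb n (idx (n+1) t)) :=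
      hbsub n _ (hidx_le (n+1) t)
    have h3 := h2 h1
    rwa [hcompat n t ht.1] at h3
  -- basic distance estimate
  have hest : ∀ n : ℕ, ∀ s ∈ Icc (0:ℝ) 1, ∀ t ∈ Icc (0:ℝ) 1, idx n s ≤ idx n t →
      idx n t ≤ idx n s + 1 → dist (γ s) (γ t) ≤ 2 * e n := by
    intro n s hs t ht h1 h2
    rcases Nat.eq_or_lt_of_le h1 with heq | hlt
    · have hd := dist_le_diam_of_mem (bounded_all (closure (D n (idx n t))))
        (heq ▸ hγmem s hs n) (hγmem t ht n)
      rw [diam_closure] at hd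
      have hdd := hDdiam n (idx n t) (hidx_le n t)
      have he0 := (hepos n).le
      linarith
    · have hadj : idx n t = idx n s + 1 := by omega
      obtain ⟨w, hw1, hw2⟩ := hDlink n (idx n s) (by have := hidx_le n t; omega)
      have hiw : (closure (D n (idx n s)) ∩ closure (D n (idx n t))).Nonempty := by
        refine ⟨w, subset_closure hw1, ?_⟩
        rw [hadj]
        exact subset_closure hw2
      have hbig : dist (γ s) (γ t)
          ≤ diam (closure (D n (idx n s)) ∪ closure (D n (idx n t))) :=
        dist_le_diam_of_mem (bounded_all _) (Set.mem_union_left _ (hγmem s hs n))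
          (Set.mem_union_right _ (hγmem t ht n))
      have hun := diam_union' hiw
      rw [diam_closure, diam_closure] at hun
      have d1 := hDdiam n (idx n s) (hidx_le n s)
      have d2 := hDdiam n (idx n t) (hidx_le n t)
      linarith
  -- mesh tends to zero
  have hesmall : ∀ δ : ℝ, 0 < δ → ∃ n, 3 * e n < δ := by
    intro δ hδ
    have hK : 0 < diam (univ:Set X) + 1 := by
      have := diam_nonneg (s := (univ:Set X)); linarith
    obtain ⟨n, hn⟩ := exists_pow_lt_of_lt_one
      (show (0:ℝ) < δ / (3 * (diam (univ:Set X) + 1)) by positivity)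
      (by norm_num : (1:ℝ)/2 < 1)
    refine ⟨n, ?_⟩
    have h1 : e n = (diam (univ:Set X) + 1) * (1/2)^n := rfl
    rw [h1]
    calc 3 * ((diam (univ:Set X) + 1) * (1/2)^n)
        < 3 * ((diam (univ:Set X) + 1) * (δ / (3*(diam (univ:Set X) + 1)))) := by
          apply mul_lt_mul_of_pos_left _ (by norm_num : (0:ℝ) < 3)
          exact mul_lt_mul_of_pos_left hn hK
      _ = δ := by field_simp
  -- endpoints
  have hidx0 : ∀ n, idx n 0 = 0 := by
    intro n
    by_contra h
    have h1 : 1 ≤ idx n 0 := by omega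
    have h2 := hidx_spec n 0 le_rfl
    have h3 : u n 1 ≤ u n (idx n 0) := humono n h1 (by have := hidx_le n 0; omega)
    have h4 := ((hInv n).2 0 (Nat.zero_le _)).1
    have h5 := (hInv n).1.1
    linarith
  have hidx1 : ∀ n, idx n 1 = m n := by
    intro n
    have h0 : u n (m n) ≤ 1 := by
      have h := humono n (Nat.le_succ (m n)) (le_refl (m n + 1))
      rw [(hInv n).1.2] at h
      exact h
    exact le_antisymm (hidx_le n 1) (hidx_ge n 1 (m n) le_rfl h0)
  have hmem01 : (0:ℝ) ∈ Icc (0:ℝ) 1 := by norm_num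
  have hmem11 : (1:ℝ) ∈ Icc (0:ℝ) 1 := by norm_num
  have hγ0 : γ 0 = x := by
    have h : ∀ n, dist (γ 0) x ≤ e n := by
      intro n
      have h1 := hγmem 0 hmem01 n
      rw [hidx0 n] at h1
      have h2 : x ∈ closure (D n 0) := subset_closure (hDx n)
      have h3 := dist_le_diam_of_mem (bounded_all (closure (D n 0))) h1 h2
      rw [diam_closure] at h3
      exact h3.trans (hDdiam n 0 (Nat.zero_le _))
    by_contra hne
    obtain ⟨n, hn⟩ := hesmall (dist (γ 0) x) (dist_pos.mpr hne)
    have := h n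
    have he0 := (hepos n).le
    linarith
  have hγ1 : γ 1 = y := by
    have h : ∀ n, dist (γ 1) y ≤ e n := by
      intro n
      have h1 := hγmem 1 hmem11 n
      rw [hidx1 n] at h1
      have h2 : y ∈ closure (D n (m n)) := subset_closure (hDy n)
      have h3 := dist_le_diam_of_mem (bounded_all (closure (D n (m n)))) h1 h2
      rw [diam_closure] at h3
      exact h3.trans (hDdiam n (m n) le_rfl)
    by_contra hne
    obtain ⟨n, hn⟩ := hesmall (dist (γ 1) y) (dist_pos.mpr hne)
    have := h n
    have he0 := (hepos n).le
    linarith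
  -- injectivity
  have key : ∀ s t : ℝ, s ∈ Icc (0:ℝ) 1 → t ∈ Icc (0:ℝ) 1 → s < t → γ s = γ t → False := by
    intro s t hs ht hlt heq
    have hstep : ∀ n, idx n t ≤ idx n s + 1 := by
      intro n
      by_contra hcon
      push_neg at hcon
      have h1 : γ s ∈ D n (idx n s) := hγopen s hs n
      have h2 : γ t ∈ D n (idx n t) := hγopen t ht n
      rw [heq] at h1
      have h3 : γ t ∈ closure (D n (idx n s)) ∩ closure (D n (idx n t)) :=
        ⟨subset_closure h1, subset_closure h2⟩
      rw [hDsep n (idx n s) (idx n t) (by omega) (hidx_le n t)] at h3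
      exact h3
    have hbound : ∀ n, t - s ≤ 2 * (1/2)^n := by
      intro n
      have h1 : u n (idx n s) ≤ s := hidx_spec n s hs.1
      have h2 : t ≤ u n (idx n t + 1) := hidx_ub n t ht.2
      have hmono0 := hidx_mono n s t hs.1 hlt.le
      have h3 : u n (idx n t + 1) - u n (idx n s) ≤ 2 * (1/2)^n := by
        rcases Nat.eq_or_lt_of_le hmono0 with heq2 | hlt2
        · have l1 := ((hInv n).2 (idx n t) (hidx_le n t)).2
          have hp : (0:ℝ) ≤ (1/2)^n := by positivity
          rw [heq2]
          linarith
        · have hadj : idx n t = idx n s + 1 := by have := hstep n; omega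
          have l1 := ((hInv n).2 (idx n s) (by have := hidx_le n t; omega)).2
          have l2 := ((hInv n).2 (idx n t) (hidx_le n t)).2
          rw [hadj] at l2
          rw [hadj]
          linarith
      linarith
    obtain ⟨n, hn⟩ := exists_pow_lt_of_lt_one
      (show (0:ℝ) < (t-s)/2 by linarith) (by norm_num : (1:ℝ)/2 < 1)
    have := hbound n
    linarith
  have hinj : InjOn γ (Icc (0:ℝ) 1) := by
    intro s hs t ht heq
    rcases lt_trichotomy s t with h | h | h
    · exact (key s t hs ht h heq).elim
    · exact h
    · exact (key t s ht hs h heq.symm).elim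
  -- continuity
  have hcont : ContinuousOn γ (Icc (0:ℝ) 1) := by
    rw [Metric.continuousOn_iff]
    intro t ht δ hδ
    obtain ⟨n, hn⟩ := hesmall δ hδ
    have hFne : ((Finset.range (m n + 1)).image (fun j => u n (j+1) - u n j)).Nonempty :=
      (Finset.nonempty_range_iff.mpr (Nat.succ_ne_zero _)).image _
    set η : ℝ := ((Finset.range (m n + 1)).image (fun j => u n (j+1) - u n j)).min' hFne
      with hηdef
    have hηpos : 0 < η := by
      obtain ⟨j, hj, hjv⟩ := Finset.mem_image.mp (Finset.min'_mem _ hFne)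
      rw [hηdef, ← hjv]
      exact ((hInv n).2 j (by have := Finset.mem_range.mp hj; omega)).1
    have hηle : ∀ j, j ≤ m n → η ≤ u n (j+1) - u n j := by
      intro j hj
      exact Finset.min'_le _ _ (Finset.mem_image_of_mem _ (Finset.mem_range.mpr (by omega)))
    have hidxclose : ∀ a b : ℝ, a ∈ Icc (0:ℝ) 1 → b ∈ Icc (0:ℝ) 1 → a ≤ b → b - a < η →
        idx n b ≤ idx n a + 1 := by
      intro a b ha hb hab hd
      by_contra hcon
      push_neg at hcon
      have hbm := hidx_le n b
      have h2 : ¬ u n (idx n a + 1) ≤ a := hidx_gt n a (idx n a + 1) (by omega) (by omega)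
      push_neg at h2
      have h3 : u n (idx n b) ≤ b := hidx_spec n b hb.1
      have h4 : u n (idx n a + 2) ≤ u n (idx n b) := humono n hcon (by omega)
      have h5 : η ≤ u n (idx n a + 2) - u n (idx n a + 1) := by
        have h6 := hηle (idx n a + 1) (by omega)
        convert h6 using 3
      linarith
    refine ⟨η, hηpos, ?_⟩
    intro s hs hdist
    rw [Real.dist_eq] at hdist
    rcases le_total s t with hst | hst
    · have hc1 : idx n t ≤ idx n s + 1 := by
        refine hidxclose s t hs ht hst ?_
        have := abs_lt.mp hdist
        linarith
      have hc2 : idx n s ≤ idx n t := hidx_mono n s t hs.1 hst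
      have hb := hest n s hs t ht hc2 hc1
      linarith
    · have hc1 : idx n s ≤ idx n t + 1 := by
        refine hidxclose t s ht hs hst ?_
        have := abs_lt.mp hdist
        linarith
      have hc2 : idx n t ≤ idx n s := hidx_mono n t s ht.1 hst
      have hb := hest n t ht s hs hc2 hc1
      calc dist (γ s) (γ t) = dist (γ t) (γ s) := dist_comm _ _
        _ ≤ 2 * e n := hb
        _ < δ := by linarith
  exact ⟨γ, hcont, hinj, hγ0, hγ1⟩

end Main

end PeanoArc

/-- Every Peano continuum is arcwise connected. -/
theorem stmt_8 {X : Type*} [MetricSpace X] [CompactSpace X] [ConnectedSpace X]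
    [LocallyConnectedSpace X] (x y : X) (hxy : x ≠ y) :
    ∃ γ : ℝ → X, ContinuousOn γ (Set.Icc 0 1) ∧ Set.InjOn γ (Set.Icc 0 1) ∧
      γ 0 = x ∧ γ 1 = y := by
  exact PeanoArc.peano_arc hxy
end

section
/- Let n ≥ 2 be an integer and let g : ℝ → ℝ be the continuous map defined by g(r) = r + 1 for r ≤ n - 1, g(n) = 1, and g linear on [n-1, ∞). Define F : ℝ² → ℝ² by F(r, s) = (g(r), s + d(r, ℤ)), where d(r, ℤ) is the distance from r to the nearest integer. Then (1, 0) is a periodic point of F of period n. -/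
/-- With `g(r) = r + 1` for `r ≤ n - 1` and `g` linear on `[n-1, ∞)` with `g(n) = 1`,
and `F(r,s) = (g r, s + d(r, ℤ))`, the point `(1,0)` is a periodic point of `F` of
period exactly `n`. -/
theorem stmt_9 (n : ℕ) (hn : 2 ≤ n) (g : ℝ → ℝ) (hgcont : Continuous g)
    (hg1 : ∀ r : ℝ, r ≤ (n : ℝ) - 1 → g r = r + 1)
    (hg2 : ∀ r : ℝ, (n : ℝ) - 1 ≤ r → g r = (n : ℝ) - ((n : ℝ) - 1) * (r - ((n : ℝ) - 1)))
    (F : ℝ × ℝ → ℝ × ℝ)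
    (hF : ∀ p : ℝ × ℝ,
      F p = (g p.1, p.2 + Metric.infDist p.1 (Set.range ((↑·) : ℤ → ℝ)))) :
    F^[n] (1, 0) = (1, 0) ∧ ∀ k : ℕ, 1 ≤ k → k < n → F^[k] (1, 0) ≠ (1, 0) := by
  have hdist : ∀ m : ℕ, Metric.infDist ((m : ℝ)) (Set.range ((↑·) : ℤ → ℝ)) = 0 := by
    intro m
    apply Metric.infDist_zero_of_mem
    exact ⟨(m : ℤ), by push_cast; ring⟩
  have key : ∀ k : ℕ, k < n → F^[k] (1, 0) = (((k : ℝ) + 1, 0) : ℝ × ℝ) := by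
    intro k hk
    induction k with
    | zero => simp
    | succ k ih =>
      have hk' : k < n := Nat.lt_of_succ_lt hk
      rw [Function.iterate_succ_apply', ih hk', hF]
      have hle : (k : ℝ) + 1 ≤ (n : ℝ) - 1 := by
        have : (k : ℕ) + 2 ≤ n := hk
        have := Nat.cast_le (α := ℝ).2 this
        push_cast at this ⊢
        linarith
      have h1 : ((k : ℝ) + 1) = ((k + 1 : ℕ) : ℝ) := by push_cast; ring
      have hd : Metric.infDist ((k : ℝ) + 1) (Set.range ((↑·) : ℤ → ℝ)) = 0 := by
        rw [h1]; exact hdist _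
      simp only [hg1 _ hle, hd]
      push_cast
      norm_num
  constructor
  · have hn1 : n - 1 < n := by omega
    have := key (n - 1) hn1
    have hcast : ((n - 1 : ℕ) : ℝ) + 1 = (n : ℝ) := by
      have : (1 : ℕ) ≤ n := by omega
      push_cast [this]
      ring
    have hF1 : F^[n] (1, 0) = F (F^[n - 1] (1, 0)) := by
      conv_lhs => rw [show n = (n - 1) + 1 by omega, Function.iterate_succ_apply']
    rw [hF1, this, hcast, hF]
    have hgn : g (n : ℝ) = 1 := by
      rw [hg2 _ (by linarith)]
      ring
    simp [hgn, hdist n]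
  · intro k hk1 hkn h
    have := key k hkn
    rw [this] at h
    have : (k : ℝ) + 1 = 1 := congrArg Prod.fst h
    have : (k : ℝ) = 0 := by linarith
    have : k = 0 := by exact_mod_cast this
    omega
end

section
/- With F as defined (g(r) = r+1 for r ≤ n-1, g(n)=1, g linear on [n-1,∞); F(r,s) = (g(r), s + d(r, ℤ))), the map F has no fixed point: F(x) ≠ x for all x ∈ ℝ². -/
/-- The map `F(r,s) = (g r, s + d(r, ℤ))` (with `g(r) = r + 1` for `r ≤ n - 1` and `g`
linear on `[n-1, ∞)` with `g(n-1) = n`, `g(n) = 1`) has no fixed point. -/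
theorem stmt_10 (n : ℕ) (hn : 2 ≤ n) (g : ℝ → ℝ) (hgcont : Continuous g)
    (hg1 : ∀ r : ℝ, r ≤ (n : ℝ) - 1 → g r = r + 1)
    (hg2 : ∀ r : ℝ, (n : ℝ) - 1 ≤ r → g r = (n : ℝ) - ((n : ℝ) - 1) * (r - ((n : ℝ) - 1)))
    (F : ℝ × ℝ → ℝ × ℝ)
    (hF : ∀ p : ℝ × ℝ,
      F p = (g p.1, p.2 + Metric.infDist p.1 (Set.range ((↑·) : ℤ → ℝ)))) :
    ∀ p : ℝ × ℝ, F p ≠ p := by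
  intro p hp
  rw [hF p, Prod.ext_iff] at hp
  obtain ⟨h1, h2⟩ := hp
  simp only at h1 h2
  have hd : Metric.infDist p.1 (Set.range ((↑·) : ℤ → ℝ)) = 0 := by linarith
  have hclosed : IsClosed (Set.range ((↑·) : ℤ → ℝ)) := by
    have : Set.range ((↑·) : ℤ → ℝ) = Set.range ((↑·) : ℤ → ℝ) := rfl
    exact Int.isClosedEmbedding_coe_real.isClosed_range
  have hmem : p.1 ∈ Set.range ((↑·) : ℤ → ℝ) := by
    rw [← hclosed.closure_eq]
    have hne : (Set.range ((↑·) : ℤ → ℝ)).Nonempty := ⟨(0:ℝ), ⟨0, by simp⟩⟩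
    exact (Metric.mem_closure_iff_infDist_zero hne).2 hd
  obtain ⟨k, hk⟩ := hmem
  simp only at hk
  by_cases hle : p.1 ≤ (n : ℝ) - 1
  · have := hg1 p.1 hle
    rw [this] at h1; linarith
  · push_neg at hle
    have := hg2 p.1 hle.le
    rw [this] at h1
    -- p.1 * n = n^2 - n + 1
    have hn2 : (2:ℝ) ≤ (n:ℝ) := by exact_mod_cast hn
    rw [← hk] at h1
    have heq : (k : ℝ) * n = (n:ℝ)^2 - n + 1 := by nlinarith [h1]
    have heqZ : k * (n:ℤ) = (n:ℤ)^2 - n + 1 := by exact_mod_cast heq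
    have h1eq : (n:ℤ) * (k - n + 1) = 1 := by ring_nf; linarith [heqZ]
    have : (n:ℤ) ∣ 1 := ⟨_, h1eq.symm⟩
    have := Int.le_of_dvd one_pos this
    omega
end

section
/- With F as defined (g(r) = r+1 for r ≤ n-1, g(n)=1, g linear on [n-1,∞); F(r,s) = (g(r), s + d(r, ℤ))), F has no periodic point of period m for any positive integer m ≠ n. -/
/-- Integer version of the map `g`. -/
def Gaux (n : ℕ) : ℤ → ℤ := fun k =>
  if k ≤ (n : ℤ) - 1 then k + 1 else (n : ℤ) - ((n : ℤ) - 1) * (k - ((n : ℤ) - 1))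

lemma Gaux_cast (n : ℕ) (g : ℝ → ℝ)
    (hg1 : ∀ r : ℝ, r ≤ (n : ℝ) - 1 → g r = r + 1)
    (hg2 : ∀ r : ℝ, (n : ℝ) - 1 ≤ r → g r = (n : ℝ) - ((n : ℝ) - 1) * (r - ((n : ℝ) - 1)))
    (k : ℤ) : g (k : ℝ) = ((Gaux n k : ℤ) : ℝ) := by
  unfold Gaux
  by_cases h : k ≤ (n : ℤ) - 1
  · rw [if_pos h, hg1 (k : ℝ) (by exact_mod_cast h)]; push_cast; ring
  · rw [if_neg h, hg2 (k : ℝ) (by push_neg at h; exact_mod_cast h.le)]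
    push_cast; ring

lemma Gaux_mem (n : ℕ) (hn : 2 ≤ n) (a : ℤ) (h1 : 1 ≤ a) (h2 : a ≤ n) :
    1 ≤ Gaux n a ∧ Gaux n a ≤ n := by
  unfold Gaux
  by_cases h : a ≤ (n : ℤ) - 1
  · rw [if_pos h]; omega
  · rw [if_neg h]
    have : a = (n : ℤ) := by omega
    subst this
    constructor <;> nlinarith [(by exact_mod_cast hn : (2:ℤ) ≤ (n:ℤ))]

lemma Gaux_iter_mem (n : ℕ) (hn : 2 ≤ n) (a : ℤ) (h1 : 1 ≤ a) (h2 : a ≤ n) (k : ℕ) :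
    1 ≤ (Gaux n)^[k] a ∧ (Gaux n)^[k] a ≤ n := by
  induction k generalizing a with
  | zero => exact ⟨h1, h2⟩
  | succ k ih =>
    rw [Function.iterate_succ_apply]
    obtain ⟨c1, c2⟩ := Gaux_mem n hn a h1 h2
    exact ih _ c1 c2

/-- climbing up: from `a ≤ n`, after `j` steps we are at `a + j` as long as `a + j ≤ n`. -/
lemma Gaux_climb (n : ℕ) (a : ℤ) (j : ℕ) (hj : (j : ℤ) ≤ (n : ℤ) - a) :
    (Gaux n)^[j] a = a + j := by
  induction j with
  | zero => simp
  | succ j ih =>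
    have hj' : (j : ℤ) ≤ (n : ℤ) - a := by push_cast at hj ⊢; omega
    rw [Function.iterate_succ_apply', ih hj']
    unfold Gaux
    rw [if_pos (by push_cast at hj; omega)]
    push_cast; ring

/-- every integer eventually reaches `[1, n]`. -/
lemma Gaux_reach (n : ℕ) (hn : 2 ≤ n) (a : ℤ) :
    ∃ N : ℕ, 1 ≤ (Gaux n)^[N] a ∧ (Gaux n)^[N] a ≤ n := by
  have hn' : (2:ℤ) ≤ (n:ℤ) := by exact_mod_cast hn
  have key : ∀ b : ℤ, b ≤ (n : ℤ) → ∃ N : ℕ, 1 ≤ (Gaux n)^[N] b ∧ (Gaux n)^[N] b ≤ n := by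
    intro b hb
    refine ⟨((n : ℤ) - b).toNat, ?_⟩
    have := Gaux_climb n b ((n:ℤ) - b).toNat (by rw [Int.toNat_of_nonneg (by omega)])
    rw [Int.toNat_of_nonneg (by omega)] at this
    rw [this]; omega
  by_cases h : a ≤ (n : ℤ)
  · exact key a h
  · have hGa : Gaux n a ≤ (n : ℤ) := by
      unfold Gaux
      rw [if_neg (by omega)]
      nlinarith
    obtain ⟨N, hN⟩ := key (Gaux n a) hGa
    exact ⟨N + 1, by rwa [Function.iterate_succ_apply]⟩

/-- on `[1, n]`, iterates are given by the cyclic formula. -/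
lemma Gaux_cycle (n : ℕ) (hn : 2 ≤ n) (a : ℤ) (h1 : 1 ≤ a) (h2 : a ≤ n) (k : ℕ) :
    (Gaux n)^[k] a = (a - 1 + k) % n + 1 := by
  have hn' : (0:ℤ) < (n:ℤ) := by exact_mod_cast (by omega : 0 < n)
  induction k with
  | zero =>
    simp only [Function.iterate_zero, id_eq, Nat.cast_zero, add_zero]
    rw [Int.emod_eq_of_lt (by omega) (by omega)]; ring
  | succ k ih =>
    rw [Function.iterate_succ_apply', ih]
    set b := (a - 1 + k) % n with hb
    have hb0 : 0 ≤ b := Int.emod_nonneg _ (by omega)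
    have hbn : b < n := Int.emod_lt_of_pos _ hn'
    have hnext : (a - 1 + (k+1 : ℕ)) % n = (b + 1) % n := by
      push_cast
      rw [hb]
      conv_lhs => rw [show a - 1 + ((k:ℤ) + 1) = (a - 1 + k) + 1 by ring]
      rw [Int.add_emod (a-1+k) 1 n, Int.add_emod b 1 n, Int.emod_emod_of_dvd _ dvd_rfl]
    rw [hnext]
    unfold Gaux
    by_cases hcase : b + 1 ≤ (n : ℤ) - 1
    · rw [if_pos hcase, Int.emod_eq_of_lt (by omega) (by omega)]
    · have : b = (n : ℤ) - 1 := by omega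
      rw [if_neg hcase, this]
      have : ((n:ℤ) - 1 + 1) % n = 0 := by simp
      rw [this]; ring

/-- The map `F(r,s) = (g r, s + d(r, ℤ))` (with `g` as before) has no periodic point of
(least) period `m` for any positive integer `m ≠ n`. -/
theorem stmt_11 (n : ℕ) (hn : 2 ≤ n) (g : ℝ → ℝ) (hgcont : Continuous g)
    (hg1 : ∀ r : ℝ, r ≤ (n : ℝ) - 1 → g r = r + 1)
    (hg2 : ∀ r : ℝ, (n : ℝ) - 1 ≤ r → g r = (n : ℝ) - ((n : ℝ) - 1) * (r - ((n : ℝ) - 1)))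
    (F : ℝ × ℝ → ℝ × ℝ)
    (hF : ∀ p : ℝ × ℝ,
      F p = (g p.1, p.2 + Metric.infDist p.1 (Set.range ((↑·) : ℤ → ℝ))))
    (m : ℕ) (hm : 0 < m) (hmn : m ≠ n) :
    ¬ ∃ p : ℝ × ℝ, F^[m] p = p ∧ ∀ k : ℕ, 0 < k → k < m → F^[k] p ≠ p := by
  rintro ⟨p, hper, hmin⟩
  set S : Set ℝ := Set.range ((↑·) : ℤ → ℝ) with hS
  have hSclosed : IsClosed S := Int.isClosedEmbedding_coe_real.isClosed_range
  have hSne : S.Nonempty := ⟨(0:ℝ), 0, by simp⟩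
  -- second coordinate of iterates
  have hsnd : ∀ k : ℕ, (F^[k] p).2 = p.2 + ∑ j ∈ Finset.range k, Metric.infDist (F^[j] p).1 S := by
    intro k
    induction k with
    | zero => simp
    | succ k ih =>
      rw [Function.iterate_succ_apply', hF, Finset.sum_range_succ]
      simp only [ih]
      ring
  -- all distances for j < m are zero
  have hsum : ∑ j ∈ Finset.range m, Metric.infDist (F^[j] p).1 S = 0 := by
    have := hsnd m
    rw [hper] at this
    linarith
  have hdist : ∀ j < m, Metric.infDist (F^[j] p).1 S = 0 := by
    intro j hj
    have := (Finset.sum_eq_zero_iff_of_nonneg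
      (fun i _ => Metric.infDist_nonneg)).mp hsum j (Finset.mem_range.mpr hj)
    exact this
  -- p.1 is an integer
  have hp1 : p.1 ∈ S := by
    rw [hSclosed.mem_iff_infDist_zero hSne]
    have := hdist 0 hm
    simpa using this
  obtain ⟨a, ha⟩ := hp1
  simp only at ha
  -- first coordinate dynamics
  have hfst : ∀ k : ℕ, (F^[k] p).1 = ((Gaux n)^[k] a : ℤ) := by
    intro k
    induction k with
    | zero => simpa using ha.symm
    | succ k ih =>
      rw [Function.iterate_succ_apply', hF]
      simp only [ih]
      rw [Function.iterate_succ_apply', Gaux_cast n g hg1 hg2]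
  -- a is periodic with period m
  have hGm : (Gaux n)^[m] a = a := by
    have := hfst m
    rw [hper, ← ha] at this
    exact_mod_cast this.symm
  have hGmul : ∀ t : ℕ, (Gaux n)^[t * m] a = a := by
    intro t
    induction t with
    | zero => simp
    | succ t ih => rw [Nat.succ_mul, Function.iterate_add_apply, hGm, ih]
  -- a lies in [1, n]
  obtain ⟨N, hN1, hN2⟩ := Gaux_reach n hn a
  have haIcc : 1 ≤ a ∧ a ≤ (n : ℤ) := by
    have h1 : (Gaux n)^[m * N - N + N] a = a := by
      have hle : N ≤ m * N := Nat.le_mul_of_pos_left N hm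
      rw [Nat.sub_add_cancel hle, Nat.mul_comm]; exact hGmul N
    rw [Function.iterate_add_apply] at h1
    rw [← h1]
    exact Gaux_iter_mem n hn _ hN1 hN2 _
  -- least period on the cycle is n : from G^[m] a = a, n ∣ m
  have hformula := Gaux_cycle n hn a haIcc.1 haIcc.2
  have hn' : (0:ℤ) < (n:ℤ) := by exact_mod_cast (by omega : 0 < n)
  have hndvd : (n : ℤ) ∣ (m : ℤ) := by
    have := hformula m
    rw [hGm] at this
    have h2 : (a - 1 + m) % n = a - 1 := by omega
    have h3 : (a - 1 + m) % n = (a - 1) % n := by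
      rw [h2, Int.emod_eq_of_lt (by omega) (by omega)]
    have := Int.emod_emod_of_dvd
    have h4 : ((m:ℤ)) % n = 0 := by
      have := Int.emod_eq_emod_iff_emod_sub_eq_zero.mp h3
      simpa using this
    exact Int.dvd_of_emod_eq_zero h4
  have hndvdm : n ∣ m := by exact_mod_cast hndvd
  have hnm : n < m := by
    rcases Nat.lt_or_ge n m with h | h
    · exact h
    · exact absurd (Nat.le_antisymm h (Nat.le_of_dvd hm hndvdm)) hmn
  -- but then F^[n] p = p, contradicting minimality
  have hGn : (Gaux n)^[n] a = a := by
    rw [hformula n]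
    have h5 : (a - 1 + (n:ℤ)) % n = a - 1 := by
      rw [show a - 1 + (n:ℤ) = a - 1 + (n:ℤ)*1 by ring, Int.add_mul_emod_self_left,
        Int.emod_eq_of_lt (by omega) (by omega)]
    rw [h5]; ring
  have hFn : F^[n] p = p := by
    have h1 : (F^[n] p).1 = p.1 := by rw [hfst n, hGn, ha]
    have h2 : (F^[n] p).2 = p.2 := by
      rw [hsnd n]
      have : ∑ j ∈ Finset.range n, Metric.infDist (F^[j] p).1 S = 0 :=
        Finset.sum_eq_zero fun j hj => hdist j (lt_trans (Finset.mem_range.mp hj) hnm)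
      rw [this]; ring
    exact Prod.ext h1 h2
  exact hmin n (by omega) hnm hFn
end

section
/- Let ρ : [0,1] → ℂ be continuous and v ∈ ℂ \ ρ([0,1]). Fix 0 ≤ a < b ≤ 1. Then the total rotational angle ∠(ρ(a) v ρ(b), ρ) — defined as the sum of directed angles ∠ρ(r_{k-1}) v ρ(r_k) over any partition a = r₀ < r₁ < ... < r_n = b with mesh less than δ (where δ is chosen so that |ρ(r) - ρ(s)| < d(v, ρ([0,1]))/3 whenever |r - s| < δ) — is independent of the choice of such a partition. -/
open Complex

/-- The directed angle `∠ x v y ∈ (-π, π]` from the ray `v → x` to the ray `v → y`. -/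
noncomputable def dirAngle (v x y : ℂ) : ℝ := Complex.arg ((y - v) / (x - v))

/-- `r` is a partition of `[a,b]` into `n` steps with mesh `< δ`. -/
def IsFinePartition (a b δ : ℝ) (n : ℕ) (r : ℕ → ℝ) : Prop :=
  r 0 = a ∧ r n = b ∧ ∀ k < n, 0 < r (k + 1) - r k ∧ r (k + 1) - r k < δ

/-- The sum of directed angles seen from `v` along the partition `r` of the path `ρ`. -/
noncomputable def angSum (ρ : ℝ → ℂ) (v : ℂ) (n : ℕ) (r : ℕ → ℝ) : ℝ :=
  ∑ k ∈ Finset.range n, dirAngle v (ρ (r k)) (ρ (r (k + 1)))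

/-!
A sum `∑ φ (r k) (r (k+1))` over a partition is unchanged by refining the partition as soon as
`φ x z = φ x y + φ y z` for `x ≤ y ≤ z` closer than the mesh bound. Two fine partitions are then
compared by induction on their total number of steps: if both start with the same step, drop it;
otherwise the earlier of the two second points is moved into the other partition as its new
starting point, which by additivity costs exactly the common first angle. The directed angle is
additive in this sense because nearby points of the path subtend angles of size `< π / 2` at `v`,
so that the arguments of the quotients add without wrapping around.
-/

lemma abs_dirAngle_lt_pi_div_two {v x y : ℂ} (h : dist x y < dist x v) :
    |dirAngle v x y| < Real.pi / 2 := by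
  have hx : x - v ≠ 0 := sub_ne_zero.2 (dist_pos.1 (dist_nonneg.trans_lt h))
  refine Complex.abs_arg_lt_pi_div_two_iff.2 (Or.inl ?_)
  have hw : (y - v) / (x - v) - 1 = (y - x) / (x - v) := by field_simp; ring
  have hlt : ‖(y - v) / (x - v) - 1‖ < 1 := by
    rw [hw, norm_div, div_lt_one (norm_pos_iff.2 hx), ← dist_eq_norm, ← dist_eq_norm, dist_comm]
    exact h
  have hre := Complex.abs_re_le_norm ((y - v) / (x - v) - 1)
  rw [Complex.sub_re, Complex.one_re] at hre
  linarith [(abs_lt.1 (hre.trans_lt hlt)).1]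

lemma dirAngle_add_of_dist_lt {v x y z : ℂ} (hxy : dist x y < dist x v)
    (hyz : dist y z < dist y v) (hz : z ≠ v) :
    dirAngle v x z = dirAngle v x y + dirAngle v y z := by
  have hx : x - v ≠ 0 := sub_ne_zero.2 (dist_pos.1 (dist_nonneg.trans_lt hxy))
  have hy : y - v ≠ 0 := sub_ne_zero.2 (dist_pos.1 (dist_nonneg.trans_lt hyz))
  obtain ⟨h₁l, h₁r⟩ := abs_lt.1 (abs_dirAngle_lt_pi_div_two hxy)
  obtain ⟨h₂l, h₂r⟩ := abs_lt.1 (abs_dirAngle_lt_pi_div_two hyz)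
  unfold dirAngle at *
  rw [← div_mul_div_cancel₀ hy, mul_comm]
  exact Complex.arg_mul (div_ne_zero hy hx) (div_ne_zero (sub_ne_zero.2 hz) hy)
    ⟨by linarith [Real.pi_pos], by linarith [Real.pi_pos]⟩

namespace IsFinePartition

variable {a b δ : ℝ} {n : ℕ} {r : ℕ → ℝ}

lemma tail (h : IsFinePartition a b δ (n + 1) r) :
    IsFinePartition (r 1) b δ n (fun k => r (k + 1)) :=
  ⟨rfl, h.2.1, fun k hk => h.2.2 (k + 1) (by omega)⟩

lemma le (h : IsFinePartition a b δ n r) : a ≤ b := by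
  induction n generalizing a r with
  | zero => exact h.1 ▸ h.2.1 ▸ le_rfl
  | succ n ih => linarith [h.1, (h.2.2 0 n.succ_pos).1, ih h.tail]

lemma pos_iff_lt (h : IsFinePartition a b δ n r) : 0 < n ↔ a < b := by
  cases n with
  | zero => simp [← h.1, h.2.1]
  | succ n => simpa [← h.1] using (h.2.2 0 n.succ_pos).1.trans_le (sub_le_sub_right h.tail.le _)

lemma update_zero (h : IsFinePartition a b δ (n + 1) r) {c : ℝ} (hc : c < r 1)
    (hcδ : r 1 - c < δ) : IsFinePartition c b δ (n + 1) (Function.update r 0 c) := by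
  refine ⟨by simp, by simpa using h.2.1, fun k hk => ?_⟩
  rcases k with _ | k
  · simp [hc, hcδ]
  · simpa using h.2.2 (k + 1) hk

end IsFinePartition

noncomputable def partitionSum (φ : ℝ → ℝ → ℝ) (n : ℕ) (r : ℕ → ℝ) : ℝ :=
  ∑ k ∈ Finset.range n, φ (r k) (r (k + 1))

lemma partitionSum_zero (φ : ℝ → ℝ → ℝ) (r : ℕ → ℝ) : partitionSum φ 0 r = 0 :=
  Finset.sum_range_zero _

lemma partitionSum_succ (φ : ℝ → ℝ → ℝ) (n : ℕ) (r : ℕ → ℝ) :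
    partitionSum φ (n + 1) r = φ (r 0) (r 1) + partitionSum φ n (fun k => r (k + 1)) :=
  (Finset.sum_range_succ' _ _).trans (add_comm _ _)

theorem partitionSum_eq_of_isFinePartition {φ : ℝ → ℝ → ℝ} {a b δ : ℝ} {n n' : ℕ}
    {r r' : ℕ → ℝ}
    (hφ : ∀ x y z, a ≤ x → x ≤ y → y ≤ z → z ≤ b → z - x < δ → φ x z = φ x y + φ y z)
    (hr : IsFinePartition a b δ n r) (hr' : IsFinePartition a b δ n' r') :
    partitionSum φ n r = partitionSum φ n' r' := by
  induction hN : n + n' using Nat.strong_induction_on generalizing a n n' r r' with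
  | _ N ih =>
  wlog hle : r 1 ≤ r' 1 generalizing n n' r r'
  · exact (this hr' hr (by omega) (le_of_not_ge hle)).symm
  by_cases hab : a < b
  swap
  · obtain rfl : n = 0 := by simpa [← hr.pos_iff_lt] using hab
    obtain rfl : n' = 0 := by simpa [← hr'.pos_iff_lt] using hab
    simp only [partitionSum_zero]
  obtain ⟨m, rfl⟩ := Nat.exists_eq_add_one_of_ne_zero (hr.pos_iff_lt.2 hab).ne'
  obtain ⟨m', rfl⟩ := Nat.exists_eq_add_one_of_ne_zero (hr'.pos_iff_lt.2 hab).ne'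
  have hac : a ≤ r 1 := by linarith [hr.1, (hr.2.2 0 m.succ_pos).1]
  have hφ_tail : ∀ x y z, r 1 ≤ x → x ≤ y → y ≤ z → z ≤ b → z - x < δ →
      φ x z = φ x y + φ y z := fun x y z hx => hφ x y z (hac.trans hx)
  rw [partitionSum_succ, partitionSum_succ, hr.1, hr'.1]
  rcases hle.eq_or_lt with heq | hlt
  · rw [heq, ih (m + m') (by omega) hφ_tail hr.tail (heq ▸ hr'.tail) rfl]
  · have hstep' := hr'.2.2 0 m'.succ_pos
    rw [hr'.1] at hstep'
    have hupd := hr'.update_zero hlt (by linarith)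
    rw [hφ a (r 1) (r' 1) le_rfl hac hlt.le hr'.tail.le hstep'.2, add_assoc,
      ih (m + (m' + 1)) (by omega) hφ_tail hr.tail hupd rfl, partitionSum_succ]
    simp only [Function.update_self, ne_eq, Nat.add_eq_zero_iff, one_ne_zero, and_false,
      not_false_eq_true, Function.update_of_ne]

theorem stmt_13_general (ρ : ℝ → ℂ) (v : ℂ)
    (a b : ℝ) (ha : 0 ≤ a) (hb : b ≤ 1)
    (δ : ℝ) (hδ : 0 < δ)
    (hδfine : ∀ r ∈ Set.Icc (0 : ℝ) 1, ∀ s ∈ Set.Icc (0 : ℝ) 1, |r - s| < δ →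
      dist (ρ r) (ρ s) < Metric.infDist v (ρ '' Set.Icc 0 1) / 3)
    (n n' : ℕ) (r r' : ℕ → ℝ)
    (hr : IsFinePartition a b δ n r) (hr' : IsFinePartition a b δ n' r') :
    angSum ρ v n r = angSum ρ v n' r' := by
  set d := Metric.infDist v (ρ '' Set.Icc 0 1)
  have hd : 0 < d := by
    have h0 : (0 : ℝ) ∈ Set.Icc 0 1 := ⟨le_rfl, zero_le_one⟩
    linarith [dist_nonneg.trans_lt (hδfine 0 h0 0 h0 (by simpa using hδ))]
  have hfar : ∀ s ∈ Set.Icc (0 : ℝ) 1, d ≤ dist (ρ s) v := fun s hs =>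
    dist_comm v (ρ s) ▸ Metric.infDist_le_dist_of_mem (Set.mem_image_of_mem ρ hs)
  have hnear : ∀ s ∈ Set.Icc (0 : ℝ) 1, ∀ t ∈ Set.Icc (0 : ℝ) 1, |s - t| < δ →
      dist (ρ s) (ρ t) < dist (ρ s) v := fun s hs t ht hst => by
    linarith [hδfine s hs t ht hst, hfar s hs]
  refine partitionSum_eq_of_isFinePartition (φ := fun s t => dirAngle v (ρ s) (ρ t))
    (fun x y z hax hxy hyz hzb hxz => ?_) hr hr'
  have hx : x ∈ Set.Icc (0 : ℝ) 1 := ⟨by linarith, by linarith⟩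
  have hy : y ∈ Set.Icc (0 : ℝ) 1 := ⟨by linarith, by linarith⟩
  have hz : z ∈ Set.Icc (0 : ℝ) 1 := ⟨by linarith, by linarith⟩
  exact dirAngle_add_of_dist_lt (hnear x hx y hy (abs_sub_lt_iff.2 ⟨by linarith, by linarith⟩))
    (hnear y hy z hz (abs_sub_lt_iff.2 ⟨by linarith, by linarith⟩))
    (dist_pos.1 (hd.trans_le (hfar z hz)))

/-- Well-definedness of the rotational angle `∠(ρ(a) v ρ(b), ρ)`: the sum of directed
angles over a sufficiently fine partition of `[a,b]` does not depend on the partition. -/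
theorem stmt_13 (ρ : ℝ → ℂ) (hρ : ContinuousOn ρ (Set.Icc 0 1))
    (v : ℂ) (hv : v ∉ ρ '' Set.Icc 0 1)
    (a b : ℝ) (ha : 0 ≤ a) (hab : a < b) (hb : b ≤ 1)
    (δ : ℝ) (hδ : 0 < δ)
    (hδfine : ∀ r ∈ Set.Icc (0 : ℝ) 1, ∀ s ∈ Set.Icc (0 : ℝ) 1, |r - s| < δ →
      dist (ρ r) (ρ s) < Metric.infDist v (ρ '' Set.Icc 0 1) / 3)
    (n n' : ℕ) (r r' : ℕ → ℝ)
    (hr : IsFinePartition a b δ n r) (hr' : IsFinePartition a b δ n' r') :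
    angSum ρ v n r = angSum ρ v n' r' :=
  stmt_13_general ρ v a b ha hb δ hδ hδfine n n' r r' hr hr'
end

section
/- Let ρ : [0,1] → ℂ be continuous, v ∉ ρ([0,1]), and 0 ≤ a < b ≤ 1. If there is a straight line L through v with L ∩ ρ([a,b]) = ∅, then the rotational angle ∠(ρ(a) v ρ(b), ρ) equals the single directed angle ∠ρ(a) v ρ(b) and lies in (-π, π). -/
open Complex

lemma argDivSub {x y : ℂ} (hx : x ≠ 0) (hy : y ≠ 0)
    (h : y.arg - x.arg ∈ Set.Ioc (-Real.pi) Real.pi) : (y / x).arg = y.arg - x.arg := by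
  have h1 := Complex.arg_div_coe_angle hy hx
  have h2 : ((y.arg - x.arg : ℝ) : Real.Angle) = (y.arg : Real.Angle) - (x.arg : Real.Angle) :=
    Real.Angle.coe_sub _ _
  rw [← Complex.arg_coe_angle_toReal_eq_arg (y / x), h1, ← h2,
    Real.Angle.toReal_coe_eq_self_iff_mem_Ioc.mpr h]

/-- If some straight line through `v` misses `ρ([a,b])`, then the rotational angle
`∠(ρ(a) v ρ(b), ρ)` equals the single directed angle `∠ ρ(a) v ρ(b)` and lies in
`(-π, π)`. -/
theorem stmt_14 (ρ : ℝ → ℂ) (hρ : ContinuousOn ρ (Set.Icc 0 1))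
    (v : ℂ) (hv : v ∉ ρ '' Set.Icc 0 1)
    (a b : ℝ) (ha : 0 ≤ a) (hab : a < b) (hb : b ≤ 1)
    (hline : ∃ w : ℂ, w ≠ 0 ∧ ∀ t : ℝ, v + t • w ∉ ρ '' Set.Icc a b)
    (δ : ℝ) (hδ : 0 < δ)
    (hδfine : ∀ r ∈ Set.Icc (0 : ℝ) 1, ∀ s ∈ Set.Icc (0 : ℝ) 1, |r - s| < δ →
      dist (ρ r) (ρ s) < Metric.infDist v (ρ '' Set.Icc 0 1) / 3)
    (n : ℕ) (r : ℕ → ℝ) (hr : IsFinePartition a b δ n r) :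
    angSum ρ v n r = dirAngle v (ρ a) (ρ b) ∧
      angSum ρ v n r ∈ Set.Ioo (-Real.pi) Real.pi := by
  obtain ⟨w, hw, hmiss⟩ := hline
  obtain ⟨hr0, hrn, hrstep⟩ := hr
  -- monotonicity of the partition
  have hmono : ∀ k l, k ≤ l → l ≤ n → r k ≤ r l := by
    intro k l hkl hln
    induction l with
    | zero => exact le_of_eq (congrArg r (Nat.le_zero.mp hkl))
    | succ m ih =>
      rcases Nat.eq_or_lt_of_le hkl with h | h
      · exact h ▸ le_refl _
      · exact le_trans (ih (Nat.lt_succ_iff.mp h) (le_trans (Nat.le_succ m) hln))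
          (le_of_lt (by linarith [(hrstep m (by omega)).1]))
  have hmem : ∀ k, k ≤ n → r k ∈ Set.Icc a b := by
    intro k hk
    exact ⟨hr0 ▸ hmono 0 k (Nat.zero_le _) hk, hrn ▸ hmono k n hk le_rfl⟩
  -- Im of (ρ t - v)/w is never zero on [a,b]
  have hIm : ∀ t ∈ Set.Icc a b, ((ρ t - v) / w).im ≠ 0 := by
    intro t ht h0
    apply hmiss ((ρ t - v) / w).re
    refine ⟨t, ht, ?_⟩
    have hq : ((ρ t - v) / w) = ((((ρ t - v) / w).re : ℝ) : ℂ) := by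
      apply Complex.ext
      · simp
      · simp [h0]
    have hmul : ρ t - v = ((ρ t - v) / w) * w := by field_simp
    rw [Complex.real_smul, ← hq, ← hmul]
    ring
  have hsub : Set.Icc a b ⊆ Set.Icc (0:ℝ) 1 := Set.Icc_subset_Icc ha hb
  have hcont : ContinuousOn (fun t => ((ρ t - v) / w).im) (Set.Icc a b) := by
    exact Complex.continuous_im.comp_continuousOn
      (((hρ.mono hsub).sub continuousOn_const).div_const w)
  -- constant sign via IVT
  have hsign : (∀ t ∈ Set.Icc a b, 0 < ((ρ t - v) / w).im) ∨
      (∀ t ∈ Set.Icc a b, ((ρ t - v) / w).im < 0) := by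
    have haI : a ∈ Set.Icc a b := ⟨le_rfl, le_of_lt hab⟩
    rcases lt_or_gt_of_ne (hIm a haI) with hneg | hpos
    · right
      intro t ht
      by_contra hle
      have hpos' : 0 < ((ρ t - v) / w).im := lt_of_le_of_ne (not_lt.mp hle) (Ne.symm (hIm t ht))
      have hivt := intermediate_value_Icc ht.1 (hcont.mono (Set.Icc_subset_Icc le_rfl ht.2))
      have : (0:ℝ) ∈ Set.Icc ((ρ a - v)/w).im ((ρ t - v)/w).im := ⟨le_of_lt hneg, le_of_lt hpos'⟩
      obtain ⟨s, hs, hs0⟩ := hivt this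
      exact hIm s (Set.Icc_subset_Icc le_rfl ht.2 hs) hs0
    · left
      intro t ht
      by_contra hle
      have hneg' : ((ρ t - v) / w).im < 0 := lt_of_le_of_ne (not_lt.mp hle) (hIm t ht)
      have hivt := intermediate_value_Icc' ht.1 (hcont.mono (Set.Icc_subset_Icc le_rfl ht.2))
      have : (0:ℝ) ∈ Set.Icc ((ρ t - v)/w).im ((ρ a - v)/w).im := ⟨le_of_lt hneg', le_of_lt hpos⟩
      obtain ⟨s, hs, hs0⟩ := hivt this
      exact hIm s (Set.Icc_subset_Icc le_rfl ht.2 hs) hs0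
  -- choose u with positive real part
  obtain ⟨u, hu0, hure⟩ : ∃ u : ℂ, u ≠ 0 ∧ ∀ t ∈ Set.Icc a b, 0 < ((ρ t - v) / u).re := by
    rcases hsign with hpos | hneg
    · refine ⟨Complex.I * w, by simp [hw, Complex.I_ne_zero], fun t ht => ?_⟩
      have he : (ρ t - v) / (Complex.I * w) = -Complex.I * ((ρ t - v) / w) := by
        field_simp
        ring_nf
        simp [Complex.I_sq]
        ring
      rw [he]
      simpa [Complex.mul_re] using hpos t ht
    · refine ⟨-(Complex.I * w), by simp [hw, Complex.I_ne_zero], fun t ht => ?_⟩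
      have he : (ρ t - v) / (-(Complex.I * w)) = Complex.I * ((ρ t - v) / w) := by
        field_simp
        ring_nf
        simp [Complex.I_sq]
      rw [he]
      simpa [Complex.mul_re] using neg_pos.mpr (hneg t ht)
  set h : ℝ → ℂ := fun t => (ρ t - v) / u with hh
  have hhne : ∀ t ∈ Set.Icc a b, h t ≠ 0 := by
    intro t ht h0
    have h1 : (0:ℝ) < (h t).re := hure t ht
    rw [h0] at h1
    simp at h1
  have hρne : ∀ t ∈ Set.Icc a b, ρ t - v ≠ 0 := by
    intro t ht h0
    exact hhne t ht (by simp [hh, h0])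
  have harg : ∀ t ∈ Set.Icc a b, |(h t).arg| < Real.pi / 2 := fun t ht =>
    Complex.abs_arg_lt_pi_div_two_iff.mpr (Or.inl (hure t ht))
  -- key per-step identity
  have hkey : ∀ s ∈ Set.Icc a b, ∀ t ∈ Set.Icc a b,
      dirAngle v (ρ s) (ρ t) = (h t).arg - (h s).arg := by
    intro s hs t ht
    have hq : (ρ t - v) / (ρ s - v) = h t / h s := by
      show _ = ((ρ t - v) / u) / ((ρ s - v) / u)
      rw [div_div_div_cancel_right₀ hu0]
    rw [dirAngle, hq]
    apply argDivSub (hhne s hs) (hhne t ht)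
    have h1 := abs_lt.mp (harg s hs)
    have h2 := abs_lt.mp (harg t ht)
    constructor <;> [linarith; linarith [Real.pi_pos]]
  -- telescoping
  have hsum : angSum ρ v n r = (h b).arg - (h a).arg := by
    have hcongr : ∀ k ∈ Finset.range n, dirAngle v (ρ (r k)) (ρ (r (k+1)))
        = (h (r (k+1))).arg - (h (r k)).arg := by
      intro k hk
      exact hkey (r k) (hmem k (le_of_lt (Finset.mem_range.mp hk)))
        (r (k+1)) (hmem (k+1) (Finset.mem_range.mp hk))
    have htel : ∑ k ∈ Finset.range n, ((h (r (k+1))).arg - (h (r k)).arg)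
        = (h (r n)).arg - (h (r 0)).arg := Finset.sum_range_sub (fun k => (h (r k)).arg) n
    rw [angSum, Finset.sum_congr rfl hcongr, htel, hr0, hrn]
  have haI : a ∈ Set.Icc a b := ⟨le_rfl, le_of_lt hab⟩
  have hbI : b ∈ Set.Icc a b := ⟨le_of_lt hab, le_rfl⟩
  have hd : dirAngle v (ρ a) (ρ b) = (h b).arg - (h a).arg := hkey a haI b hbI
  refine ⟨by rw [hsum, hd], ?_⟩
  rw [hsum]
  have h1 := abs_lt.mp (harg a haI)
  have h2 := abs_lt.mp (harg b hbI)
  constructor <;> [linarith; linarith]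
end

section
/- Let ρ : [0,1] → ℂ be continuous, v ∉ ρ([0,1]), and 0 ≤ a < b ≤ 1. Then (∠(ρ(a) v ρ(b), ρ) − ∠ρ(a) v ρ(b)) / (2π) is an integer, where ∠ρ(a) v ρ(b) is the directed angle in (-π, π] from the ray v→ρ(a) to the ray v→ρ(b). -/
open Complex

/-- The rotational angle `∠(ρ(a) v ρ(b), ρ)` differs from the directed angle
`∠ ρ(a) v ρ(b)` by an integer multiple of `2π`. -/
theorem stmt_15 (ρ : ℝ → ℂ) (hρ : ContinuousOn ρ (Set.Icc 0 1))
    (v : ℂ) (hv : v ∉ ρ '' Set.Icc 0 1)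
    (a b : ℝ) (ha : 0 ≤ a) (hab : a < b) (hb : b ≤ 1)
    (δ : ℝ) (hδ : 0 < δ)
    (hδfine : ∀ r ∈ Set.Icc (0 : ℝ) 1, ∀ s ∈ Set.Icc (0 : ℝ) 1, |r - s| < δ →
      dist (ρ r) (ρ s) < Metric.infDist v (ρ '' Set.Icc 0 1) / 3)
    (n : ℕ) (r : ℕ → ℝ) (hr : IsFinePartition a b δ n r) :
    ∃ m : ℤ, angSum ρ v n r - dirAngle v (ρ a) (ρ b) = 2 * Real.pi * m := by
  obtain ⟨h0, hn, hstep⟩ := hr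
  -- monotonicity: k ≤ n → a ≤ r k, and k ≤ n → r k ≤ b
  have hmono : ∀ j k, j ≤ k → k ≤ n → r j ≤ r k := by
    intro j k hjk hkn
    induction k with
    | zero => simp_all
    | succ k ih =>
      rcases Nat.lt_or_ge j (k+1) with h | h
      · have := (hstep k (by omega)).1
        have := ih (by omega) (by omega)
        linarith
      · have : j = k + 1 := by omega
        simp [this]
  have hrange : ∀ k ≤ n, r k ∈ Set.Icc (0:ℝ) 1 := by
    intro k hk
    constructor
    · have := hmono 0 k (by omega) hk; rw [h0] at this; linarith
    · have := hmono k n hk le_rfl; rw [hn] at this; linarith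
  have hne : ∀ k ≤ n, ρ (r k) - v ≠ 0 := by
    intro k hk h
    exact hv ⟨r k, hrange k hk, (sub_eq_zero.mp h).symm ▸ rfl⟩
  -- angle-valued equality
  have key : ((angSum ρ v n r : ℝ) : Real.Angle) = ((dirAngle v (ρ a) (ρ b) : ℝ) : Real.Angle) := by
    rw [angSum, show ((∑ k ∈ Finset.range n, dirAngle v (ρ (r k)) (ρ (r (k+1))) : ℝ) : Real.Angle)
        = ∑ k ∈ Finset.range n, ((dirAngle v (ρ (r k)) (ρ (r (k+1))) : ℝ) : Real.Angle)
      from map_sum Real.Angle.coeHom _ _]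
    have hterm : ∀ k ∈ Finset.range n,
        ((dirAngle v (ρ (r k)) (ρ (r (k+1))) : ℝ) : Real.Angle)
          = ((Complex.arg (ρ (r (k+1)) - v) : ℝ) : Real.Angle)
            - ((Complex.arg (ρ (r k) - v) : ℝ) : Real.Angle) := by
      intro k hk
      rw [Finset.mem_range] at hk
      exact Complex.arg_div_coe_angle (hne (k+1) (by omega)) (hne k (by omega))
    have hneA : ρ a - v ≠ 0 := h0 ▸ hne 0 (Nat.zero_le n)
    have hneB : ρ b - v ≠ 0 := hn ▸ hne n le_rfl
    rw [Finset.sum_congr rfl hterm, Finset.sum_range_sub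
      (fun k => ((Complex.arg (ρ (r k) - v) : ℝ) : Real.Angle)), h0, hn, dirAngle,
      Complex.arg_div_coe_angle hneB hneA]
  rwa [Real.Angle.angle_eq_iff_two_pi_dvd_sub] at key
end
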